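/- arXiv:2603.20748 — 6 statements merged into one kernel-verified Lean document; each statement's English description precedes it below -/
import Mathlib

section
/- Every nonzero vector of V = (ZMod 2)² × (ZMod 2)² is a member of exactly 3 commuting triples. -/
/-- The symplectic vector space `V = (ZMod 2)² × (ZMod 2)²` modeling the
two-qubit Pauli quotient group `P₂`: a vector `u = (x, z)` records the
X-part and the Z-part of a two-qubit Pauli operator (up to phase). -/
abbrev V : Type := (ZMod 2 × ZMod 2) × (ZMod 2 × ZMod 2)

/-- The standard symplectic form `ω((x, z), (x', z')) = x⬝z' + x'⬝z`. -/
def omegaForm (u v : V) : ZMod 2 :=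
  u.1.1 * v.2.1 + u.1.2 * v.2.2 + v.1.1 * u.2.1 + v.1.2 * u.2.2

/-- A commuting triple: a 3-element set `{u, v, w}` of distinct nonzero
vectors of `V` that are pairwise symplectically orthogonal and sum to `0`. -/
def IsCommutingTriple (T : Finset V) : Prop :=
  T.card = 3 ∧ (∀ u ∈ T, u ≠ 0) ∧
    (∀ u ∈ T, ∀ v ∈ T, omegaForm u v = 0) ∧ (∑ u ∈ T, u) = 0

def S (u : V) : Finset V := Finset.univ.filter (fun v => v ≠ 0 ∧ v ≠ u ∧ omegaForm u v = 0)

lemma card_S : ∀ u : V, u ≠ 0 → (S u).card = 6 := by decide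

lemma mem_S {u a : V} : a ∈ S u ↔ a ≠ 0 ∧ a ≠ u ∧ omegaForm u a = 0 := by
  simp [S]

lemma addV_self : ∀ x : V, x + x = 0 := by decide

lemma omega_self (x : V) : omegaForm x x = 0 := by
  revert x; decide

lemma omega_comm (x y : V) : omegaForm x y = omegaForm y x := by
  simp [omegaForm]; ring

lemma omega_add_right (x y z : V) :
    omegaForm x (y + z) = omegaForm x y + omegaForm x z := by
  simp [omegaForm, Prod.fst_add, Prod.snd_add]; ring

lemma eq_add_of_sum (u v w : V) (h : u + (v + w) = 0) : w = u + v := by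
  calc w = ((u + v) + (u + v)) + w := by rw [addV_self, zero_add]
    _ = (u + v) + ((u + v) + w) := by rw [add_assoc]
    _ = (u + v) + (u + (v + w)) := by ring_nf
    _ = u + v := by rw [h, add_zero]

lemma cancel_left (u v : V) : u + (u + v) = v := by
  rw [← add_assoc, addV_self, zero_add]

theorem each_nonzero_vector_in_three_triples (u : V) (hu : u ≠ 0) :
    {T : Finset V | IsCommutingTriple T ∧ u ∈ T}.ncard = 3 := by
  classical
  set f : V → Finset V := fun v => ({u, v, u + v} : Finset V) with hf
  have hset : {T : Finset V | IsCommutingTriple T ∧ u ∈ T} = ↑((S u).image f) := by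
    ext T
    simp only [Finset.coe_image, Set.mem_image, Finset.mem_coe, Set.mem_setOf_eq]
    constructor
    · rintro ⟨⟨hcard, hnz, homega, hsum⟩, huT⟩
      obtain ⟨a, b, c, hab, hac, hbc, hT⟩ := Finset.card_eq_three.mp hcard
      have key : ∃ v w : V, v ≠ w ∧ u ≠ v ∧ u ≠ w ∧ T = {u, v, w} := by
        subst hT
        simp only [Finset.mem_insert, Finset.mem_singleton] at huT
        rcases huT with rfl | rfl | rfl
        · exact ⟨b, c, hbc, hab, hac, rfl⟩
        · exact ⟨a, c, hac, fun h => hab h.symm, hbc,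
            by ext x; simp [Finset.mem_insert]; tauto⟩
        · exact ⟨a, b, hab, fun h => hac h.symm, fun h => hbc h.symm,
            by ext x; simp [Finset.mem_insert]; tauto⟩
      obtain ⟨v, w, hvw, huv, huw, rfl⟩ := key
      have hvT : v ∈ ({u, v, w} : Finset V) := by simp
      have hwT : w ∈ ({u, v, w} : Finset V) := by simp
      have huT' : u ∈ ({u, v, w} : Finset V) := by simp
      have hsum' : u + (v + w) = 0 := by
        rw [Finset.sum_insert (by simp [huv, huw]), Finset.sum_pair hvw] at hsum
        exact hsum
      have hwuv : w = u + v := eq_add_of_sum u v w hsum'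
      refine ⟨v, mem_S.mpr ⟨hnz v hvT, fun h => huv h.symm, homega u huT' v hvT⟩, ?_⟩
      show ({u, v, u + v} : Finset V) = {u, v, w}
      rw [hwuv]
    · rintro ⟨v, hv, rfl⟩
      obtain ⟨hv0, hvu, hω⟩ := mem_S.mp hv
      have huv : u ≠ v := fun h => hvu h.symm
      have huuv : u ≠ u + v := by
        intro h
        exact hv0 (by rw [← cancel_left u v, ← h, addV_self])
      have hvuv : v ≠ u + v := by
        intro h
        apply hu
        have := congrArg (fun t => v + t) h
        rw [addV_self] at this
        have : v + (u + v) = u := by rw [add_comm u v, cancel_left]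
        rw [← this]
        have h2 := congrArg (fun t => v + t) h
        simp only [addV_self] at h2
        rw [← h2]
      have huv0 : u + v ≠ 0 := by
        intro h
        apply hvu
        have := congrArg (fun t => u + t) h
        simp only [cancel_left, add_zero] at this
        rw [this]
      constructor
      · refine ⟨?_, ?_, ?_, ?_⟩
        · rw [hf]
          rw [Finset.card_insert_of_notMem (by simp [huv, huuv]),
            Finset.card_pair hvuv]
        · intro x hx
          simp only [hf, Finset.mem_insert, Finset.mem_singleton] at hx
          rcases hx with rfl | rfl | rfl
          · exact hu
          · exact hv0
          · exact huv0
        · have e1 : omegaForm u (u + v) = 0 := by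
            rw [omega_add_right, omega_self, hω, add_zero]
          have e2 : omegaForm v u = 0 := by rw [omega_comm]; exact hω
          have e3 : omegaForm v (u + v) = 0 := by
            rw [omega_add_right, omega_self, e2, add_zero]
          intro a ha b hb
          simp only [hf, Finset.mem_insert, Finset.mem_singleton] at ha hb
          rcases ha with rfl | rfl | rfl <;> rcases hb with rfl | rfl | rfl
          · exact omega_self _
          · exact hω
          · exact e1
          · exact e2
          · exact omega_self _
          · exact e3
          · rw [omega_comm]; exact e1
          · rw [omega_comm]; exact e3
          · exact omega_self _
        · rw [hf, Finset.sum_insert (by simp [huv, huuv]), Finset.sum_pair hvuv]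
          have : u + (v + (u + v)) = (u + v) + (u + v) := by ring
          rw [this, addV_self]
      · simp [hf]
  rw [hset, Set.ncard_coe_finset]
  have hcard6 := card_S u hu
  have key : (S u).card = ∑ T ∈ (S u).image f, ((S u).filter (fun a => f a = T)).card :=
    Finset.card_eq_sum_card_fiberwise (fun x hx => Finset.mem_image_of_mem f hx)
  have hfib : ∀ T ∈ (S u).image f, ((S u).filter (fun a => f a = T)).card = 2 := by
    intro T hT
    obtain ⟨v, hv, rfl⟩ := Finset.mem_image.mp hT
    obtain ⟨hv0, hvu, hω⟩ := mem_S.mp hv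
    have hvuv : v ≠ u + v := by
      intro h
      apply hu
      have h2 := congrArg (fun t => v + t) h
      simp only [addV_self] at h2
      have h3 : v + (u + v) = u := by rw [add_comm u v, cancel_left]
      rw [← h3, ← h2]
    have hfeq : (S u).filter (fun a => f a = f v) = {v, u + v} := by
      ext a
      simp only [Finset.mem_filter, Finset.mem_insert, Finset.mem_singleton]
      constructor
      · rintro ⟨ha, hfa⟩
        obtain ⟨ha0, hau, _⟩ := mem_S.mp ha
        have hmem : a ∈ f v := by
          rw [← hfa]; simp [hf]
        simp only [hf, Finset.mem_insert, Finset.mem_singleton] at hmem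
        rcases hmem with rfl | rfl | rfl
        · exact absurd rfl hau
        · exact Or.inl rfl
        · exact Or.inr rfl
      · rintro (rfl | rfl)
        · exact ⟨hv, rfl⟩
        · refine ⟨mem_S.mpr ⟨?_, ?_, ?_⟩, ?_⟩
          · intro h
            apply hvu
            have := congrArg (fun t => u + t) h
            simp only [cancel_left, add_zero] at this
            rw [this]
          · intro h
            have := congrArg (fun t => u + t) h
            simp only [cancel_left, addV_self] at this
            exact hv0 this
          · rw [omega_add_right, omega_self, hω, add_zero]
          · simp only [hf]
            have : u + (u + v) = v := cancel_left u v
            rw [this]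
            ext x; simp; tauto
    rw [hfeq, Finset.card_pair hvuv]
  rw [key, Finset.sum_congr rfl hfib, Finset.sum_const, smul_eq_mul] at hcard6
  omega
end

section
/- An optimal symmetric strategy for the AMS game wins with probability 13/15: for every A : Fin 15 → (Fin 15 → ZMod 2) one has AMSwins(A,A) ≤ 78, and there exists A with AMSwins(A,A) = 78 (note 78/90 = 13/15 < 8/9). -/
/-- The variable index set of each of the 15 AMS equations. -/
def vars : Fin 15 → Finset (Fin 15)
  | 0 => {0, 3, 6}
  | 1 => {1, 3, 7}
  | 2 => {2, 3, 8}
  | 3 => {0, 4, 9}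
  | 4 => {1, 4, 10}
  | 5 => {2, 4, 11}
  | 6 => {0, 5, 12}
  | 7 => {1, 5, 13}
  | 8 => {2, 5, 14}
  | 9 => {6, 11, 13}
  | 10 => {8, 10, 12}
  | 11 => {7, 9, 14}
  | 12 => {6, 10, 14}
  | 13 => {7, 11, 12}
  | 14 => {8, 9, 13}

/-- The parity of each of the 15 AMS equations. -/
def par : Fin 15 → ZMod 2
  | 12 => 1
  | 13 => 1
  | 14 => 1
  | _ => 0

/-- The 90 ordered pairs of distinct AMS equations sharing exactly one variable. -/
def Pairs : Finset (Fin 15 × Fin 15) :=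
  Finset.univ.filter fun p => p.1 ≠ p.2 ∧ (vars p.1 ∩ vars p.2).card = 1

/-- The number of pairs in `Pairs` on which the classical deterministic strategy
`(A, B)` wins: both parity constraints hold and the answers agree on the shared
variable. -/
def AMSwins (A B : Fin 15 → Fin 15 → ZMod 2) : ℕ :=
  (Pairs.filter fun p =>
    (∑ m ∈ vars p.1, A p.1 m) = par p.1 ∧
    (∑ m ∈ vars p.2, B p.2 m) = par p.2 ∧
    ∀ m ∈ vars p.1 ∩ vars p.2, A p.1 m = B p.2 m).card

/-! ### Auxiliary machinery -/

/-- Ten "contradiction certificates": subsets of equations in which every variable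
occurs an even number of times but whose parities sum to `1`. -/
def certAt : Fin 10 → Finset (Fin 15)
  | 0 => {4,5,7,8,9,12}
  | 1 => {0,2,6,8,10,12}
  | 2 => {0,1,3,4,11,12}
  | 3 => {0,1,6,7,9,13}
  | 4 => {1,2,4,5,10,13}
  | 5 => {3,5,6,8,11,13}
  | 6 => {0,2,3,5,9,14}
  | 7 => {3,4,6,7,10,14}
  | 8 => {1,2,7,8,11,14}
  | 9 => {9,10,11,12,13,14}

def certIdx : Fin 15 → Fin 15 → Fin 10
  | 0, 0 => 0
  | 0, 1 => 9
  | 0, 2 => 9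
  | 0, 3 => 0
  | 0, 4 => 8
  | 0, 5 => 4
  | 0, 6 => 4
  | 0, 7 => 0
  | 0, 8 => 0
  | 0, 9 => 0
  | 0, 10 => 8
  | 0, 11 => 8
  | 0, 12 => 0
  | 0, 13 => 4
  | 0, 14 => 4
  | 1, 0 => 9
  | 1, 1 => 1
  | 1, 2 => 9
  | 1, 3 => 5
  | 1, 4 => 1
  | 1, 5 => 6
  | 1, 6 => 5
  | 1, 7 => 1
  | 1, 8 => 5
  | 1, 9 => 1
  | 1, 10 => 5
  | 1, 11 => 1
  | 1, 12 => 6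
  | 1, 13 => 1
  | 1, 14 => 6
  | 2, 0 => 9
  | 2, 1 => 9
  | 2, 2 => 2
  | 2, 3 => 7
  | 2, 4 => 3
  | 2, 5 => 2
  | 2, 6 => 7
  | 2, 7 => 7
  | 2, 8 => 2
  | 2, 9 => 3
  | 2, 10 => 3
  | 2, 11 => 2
  | 2, 12 => 2
  | 2, 13 => 2
  | 2, 14 => 3
  | 3, 0 => 0
  | 3, 1 => 5
  | 3, 2 => 7
  | 3, 3 => 0
  | 3, 4 => 9
  | 3, 5 => 9
  | 3, 6 => 5
  | 3, 7 => 0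
  | 3, 8 => 0
  | 3, 9 => 0
  | 3, 10 => 5
  | 3, 11 => 7
  | 3, 12 => 0
  | 3, 13 => 5
  | 3, 14 => 7
  | 4, 0 => 8
  | 4, 1 => 1
  | 4, 2 => 3
  | 4, 3 => 9
  | 4, 4 => 1
  | 4, 5 => 9
  | 4, 6 => 8
  | 4, 7 => 1
  | 4, 8 => 3
  | 4, 9 => 1
  | 4, 10 => 3
  | 4, 11 => 1
  | 4, 12 => 8
  | 4, 13 => 1
  | 4, 14 => 3
  | 5, 0 => 4
  | 5, 1 => 6
  | 5, 2 => 2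
  | 5, 3 => 9
  | 5, 4 => 9
  | 5, 5 => 2
  | 5, 6 => 4
  | 5, 7 => 6
  | 5, 8 => 2
  | 5, 9 => 4
  | 5, 10 => 6
  | 5, 11 => 2
  | 5, 12 => 2
  | 5, 13 => 2
  | 5, 14 => 4
  | 6, 0 => 4
  | 6, 1 => 5
  | 6, 2 => 7
  | 6, 3 => 5
  | 6, 4 => 8
  | 6, 5 => 4
  | 6, 6 => 4
  | 6, 7 => 7
  | 6, 8 => 5
  | 6, 9 => 4
  | 6, 10 => 5
  | 6, 11 => 7
  | 6, 12 => 8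
  | 6, 13 => 4
  | 6, 14 => 4
  | 7, 0 => 0
  | 7, 1 => 1
  | 7, 2 => 7
  | 7, 3 => 0
  | 7, 4 => 1
  | 7, 5 => 6
  | 7, 6 => 7
  | 7, 7 => 0
  | 7, 8 => 0
  | 7, 9 => 0
  | 7, 10 => 6
  | 7, 11 => 1
  | 7, 12 => 0
  | 7, 13 => 1
  | 7, 14 => 6
  | 8, 0 => 0
  | 8, 1 => 5
  | 8, 2 => 2
  | 8, 3 => 0
  | 8, 4 => 3
  | 8, 5 => 2
  | 8, 6 => 5
  | 8, 7 => 0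
  | 8, 8 => 0
  | 8, 9 => 0
  | 8, 10 => 3
  | 8, 11 => 2
  | 8, 12 => 0
  | 8, 13 => 2
  | 8, 14 => 3
  | 9, 0 => 0
  | 9, 1 => 1
  | 9, 2 => 3
  | 9, 3 => 0
  | 9, 4 => 1
  | 9, 5 => 4
  | 9, 6 => 4
  | 9, 7 => 0
  | 9, 8 => 0
  | 9, 9 => 0
  | 9, 10 => 3
  | 9, 11 => 1
  | 9, 12 => 0
  | 9, 13 => 1
  | 9, 14 => 3
  | 10, 0 => 8
  | 10, 1 => 5
  | 10, 2 => 3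
  | 10, 3 => 5
  | 10, 4 => 3
  | 10, 5 => 6
  | 10, 6 => 5
  | 10, 7 => 6
  | 10, 8 => 3
  | 10, 9 => 3
  | 10, 10 => 3
  | 10, 11 => 8
  | 10, 12 => 6
  | 10, 13 => 5
  | 10, 14 => 3
  | 11, 0 => 8
  | 11, 1 => 1
  | 11, 2 => 2
  | 11, 3 => 7
  | 11, 4 => 1
  | 11, 5 => 2
  | 11, 6 => 7
  | 11, 7 => 1
  | 11, 8 => 2
  | 11, 9 => 1
  | 11, 10 => 8
  | 11, 11 => 1
  | 11, 12 => 2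
  | 11, 13 => 1
  | 11, 14 => 7
  | 12, 0 => 0
  | 12, 1 => 6
  | 12, 2 => 2
  | 12, 3 => 0
  | 12, 4 => 8
  | 12, 5 => 2
  | 12, 6 => 8
  | 12, 7 => 0
  | 12, 8 => 0
  | 12, 9 => 0
  | 12, 10 => 6
  | 12, 11 => 2
  | 12, 12 => 0
  | 12, 13 => 2
  | 12, 14 => 6
  | 13, 0 => 4
  | 13, 1 => 1
  | 13, 2 => 2
  | 13, 3 => 5
  | 13, 4 => 1
  | 13, 5 => 2
  | 13, 6 => 4
  | 13, 7 => 1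
  | 13, 8 => 2
  | 13, 9 => 1
  | 13, 10 => 5
  | 13, 11 => 1
  | 13, 12 => 2
  | 13, 13 => 1
  | 13, 14 => 4
  | 14, 0 => 4
  | 14, 1 => 6
  | 14, 2 => 3
  | 14, 3 => 7
  | 14, 4 => 3
  | 14, 5 => 4
  | 14, 6 => 4
  | 14, 7 => 6
  | 14, 8 => 3
  | 14, 9 => 3
  | 14, 10 => 3
  | 14, 11 => 7
  | 14, 12 => 6
  | 14, 13 => 4
  | 14, 14 => 3

/-- The three equations containing a given variable. -/
def eqsOf : Fin 15 → Fin 15 × Fin 15 × Fin 15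
  | 0 => (0,3,6) | 1 => (1,4,7) | 2 => (2,5,8)
  | 3 => (0,1,2) | 4 => (3,4,5) | 5 => (6,7,8)
  | 6 => (0,9,12) | 7 => (1,11,13) | 8 => (2,10,14)
  | 9 => (3,11,14) | 10 => (4,10,12) | 11 => (5,9,13)
  | 12 => (6,10,13) | 13 => (7,9,14) | 14 => (8,11,12)

/-- The variable shared by a pair of equations (as the sum of the intersection,
which equals the unique shared variable for pairs in `Pairs`). -/
def shared (p : Fin 15 × Fin 15) : Fin 15 := ∑ x ∈ vars p.1 ∩ vars p.2, x

def tripSet (e1 e2 e3 : Fin 15) : Finset (Fin 15 × Fin 15) :=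
  {(e1,e2),(e2,e1),(e1,e3),(e3,e1),(e2,e3),(e3,e2)}

def tripPairs (m : Fin 15) : Finset (Fin 15 × Fin 15) :=
  tripSet (eqsOf m).1 (eqsOf m).2.1 (eqsOf m).2.2

lemma cert_props : ∀ i : Fin 10,
    (∀ v : Fin 15, ((certAt i).filter (fun j => v ∈ vars j)).card % 2 = 0) ∧
    (∑ j ∈ certAt i, par j) = 1 := by decide

lemma cert_avoid : ∀ a b : Fin 15, ∀ j ∈ certAt (certIdx a b), a ∉ vars j ∧ b ∉ vars j := by
  decide

lemma mem_vars_iff : ∀ m j : Fin 15,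
    m ∈ vars j ↔ (j = (eqsOf m).1 ∨ j = (eqsOf m).2.1 ∨ j = (eqsOf m).2.2) := by decide

lemma fiber_eq : ∀ m : Fin 15, Pairs.filter (fun p => shared p = m) = tripPairs m := by decide

lemma fiber_card : ∀ m : Fin 15, (Pairs.filter (fun p => shared p = m)).card = 6 := by decide

lemma notok_card : ∀ j0 : Fin 15,
    (Pairs.filter fun p => p.1 ≠ j0 ∧ p.2 ≠ j0).card = 78 := by decide

/-- From a contradiction certificate, extract a "bad" variable: one on which two
equations of the certificate disagree. -/
lemma kernel_bad (A : Fin 15 → Fin 15 → ZMod 2) (S : Finset (Fin 15))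
    (hker : ∀ v : Fin 15, (S.filter (fun j => v ∈ vars j)).card % 2 = 0)
    (hpar : (∑ j ∈ S, par j) = 1)
    (hok : ∀ j, (∑ m ∈ vars j, A j m) = par j) :
    ∃ v j k, j ∈ S ∧ k ∈ S ∧ v ∈ vars j ∧ v ∈ vars k ∧ A j v ≠ A k v := by
  by_contra hcon
  push_neg at hcon
  have h0 : (1 : ZMod 2) = 0 := by
    calc (1 : ZMod 2) = ∑ j ∈ S, par j := hpar.symm
      _ = ∑ j ∈ S, ∑ m ∈ vars j, A j m :=
          Finset.sum_congr rfl fun j _ => (hok j).symm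
      _ = ∑ j ∈ S, ∑ m : Fin 15, if m ∈ vars j then A j m else 0 := by
          refine Finset.sum_congr rfl fun j _ => ?_
          rw [Finset.sum_ite_mem, Finset.univ_inter]
      _ = ∑ m : Fin 15, ∑ j ∈ S, if m ∈ vars j then A j m else 0 := Finset.sum_comm
      _ = ∑ m : Fin 15, ∑ j ∈ S.filter (fun j => m ∈ vars j), A j m :=
          Finset.sum_congr rfl fun m _ => (Finset.sum_filter _ _).symm
      _ = ∑ m : Fin 15, (0 : ZMod 2) := by
          refine Finset.sum_congr rfl fun m _ => ?_
          rcases (S.filter (fun j => m ∈ vars j)).eq_empty_or_nonempty with he | ⟨j0, hj0⟩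
          · rw [he, Finset.sum_empty]
          · have hj0' := Finset.mem_filter.mp hj0
            have hcst : ∀ j ∈ S.filter (fun j => m ∈ vars j), A j m = A j0 m := by
              intro j hj
              have hj' := Finset.mem_filter.mp hj
              exact hcon m j j0 hj'.1 hj0'.1 hj'.2 hj0'.2
            rw [Finset.sum_congr rfl hcst, Finset.sum_const]
            obtain ⟨c, hc⟩ := Nat.even_iff.mpr (hker m)
            rw [hc, add_nsmul, CharTwo.add_self_eq_zero]
      _ = 0 := Finset.sum_const_zero
  exact one_ne_zero h0

/-- Among the six ordered pairs of equations through a variable on which the three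
answers are not all equal, at most two pairs agree on that variable. -/
lemma agree_card_le (e1 e2 e3 : Fin 15) (A : Fin 15 → Fin 15 → ZMod 2) (v : Fin 15)
    (hna : ¬(A e1 v = A e2 v ∧ A e2 v = A e3 v)) :
    ((tripSet e1 e2 e3).filter (fun p => A p.1 v = A p.2 v)).card ≤ 2 := by
  have key : ∀ x y : Fin 15,
      (tripSet e1 e2 e3).filter (fun p => A p.1 v = A p.2 v) ⊆ {(x,y),(y,x)} →
      ((tripSet e1 e2 e3).filter (fun p => A p.1 v = A p.2 v)).card ≤ 2 := by
    intro x y hsub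
    exact le_trans (Finset.card_le_card hsub)
      (le_trans (Finset.card_insert_le _ _) (by simp))
  by_cases h12 : A e1 v = A e2 v
  · have h23 : ¬ A e2 v = A e3 v := fun h => hna ⟨h12, h⟩
    have h13 : ¬ A e1 v = A e3 v := fun h => h23 (h12.symm.trans h)
    refine key e1 e2 ?_
    intro p hp
    rw [Finset.mem_filter] at hp
    obtain ⟨hmem, hag⟩ := hp
    simp only [tripSet, Finset.mem_insert, Finset.mem_singleton] at hmem ⊢
    rcases hmem with rfl|rfl|rfl|rfl|rfl|rfl <;>
      first | exact Or.inl rfl | exact Or.inr rfl | simp_all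
  · by_cases h13 : A e1 v = A e3 v
    · have h23 : ¬ A e2 v = A e3 v := fun h => h12 (h13.trans h.symm)
      refine key e1 e3 ?_
      intro p hp
      rw [Finset.mem_filter] at hp
      obtain ⟨hmem, hag⟩ := hp
      simp only [tripSet, Finset.mem_insert, Finset.mem_singleton] at hmem ⊢
      rcases hmem with rfl|rfl|rfl|rfl|rfl|rfl <;>
      first | exact Or.inl rfl | exact Or.inr rfl | simp_all
    · have h23 : A e2 v = A e3 v := by
        have hz : ∀ a b c : ZMod 2, ¬ a = b → ¬ a = c → b = c := by decide
        exact hz _ _ _ h12 h13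
      refine key e2 e3 ?_
      intro p hp
      rw [Finset.mem_filter] at hp
      obtain ⟨hmem, hag⟩ := hp
      simp only [tripSet, Finset.mem_insert, Finset.mem_singleton] at hmem ⊢
      rcases hmem with rfl|rfl|rfl|rfl|rfl|rfl <;>
      first | exact Or.inl rfl | exact Or.inr rfl | simp_all

/-- If the answers of two equations disagree on a variable `v`, the strategy wins on
at most two of the six pairs sharing `v`. -/
lemma bad_two (A : Fin 15 → Fin 15 → ZMod 2) (v j k : Fin 15)
    (hvj : v ∈ vars j) (hvk : v ∈ vars k) (hne : A j v ≠ A k v) :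
    ((Pairs.filter (fun p =>
        (∑ m ∈ vars p.1, A p.1 m) = par p.1 ∧
        (∑ m ∈ vars p.2, A p.2 m) = par p.2 ∧
        ∀ m ∈ vars p.1 ∩ vars p.2, A p.1 m = A p.2 m)).filter
      (fun p => shared p = v)).card ≤ 2 := by
  have hsub : (Pairs.filter (fun p =>
        (∑ m ∈ vars p.1, A p.1 m) = par p.1 ∧
        (∑ m ∈ vars p.2, A p.2 m) = par p.2 ∧
        ∀ m ∈ vars p.1 ∩ vars p.2, A p.1 m = A p.2 m)).filter (fun p => shared p = v) ⊆
      (tripPairs v).filter (fun p => A p.1 v = A p.2 v) := by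
    intro p hp
    rw [Finset.mem_filter] at hp
    obtain ⟨hp1, hsh⟩ := hp
    rw [Finset.mem_filter] at hp1
    obtain ⟨hpp, hw⟩ := hp1
    have hcard : (vars p.1 ∩ vars p.2).card = 1 := (Finset.mem_filter.mp hpp).2.2
    obtain ⟨m', hm'⟩ := Finset.card_eq_one.mp hcard
    have hshv : shared p = m' := by unfold shared; rw [hm', Finset.sum_singleton]
    have hmv : v ∈ vars p.1 ∩ vars p.2 := by
      rw [hm']
      have : m' = v := hshv.symm.trans hsh
      rw [this]
      exact Finset.mem_singleton_self v
    have hag : A p.1 v = A p.2 v := hw.2.2 v hmv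
    rw [Finset.mem_filter]
    refine ⟨?_, hag⟩
    rw [← fiber_eq v, Finset.mem_filter]
    exact ⟨hpp, hsh⟩
  refine le_trans (Finset.card_le_card hsub) ?_
  have hj' := (mem_vars_iff v j).mp hvj
  have hk' := (mem_vars_iff v k).mp hvk
  have hna : ¬(A (eqsOf v).1 v = A (eqsOf v).2.1 v ∧
      A (eqsOf v).2.1 v = A (eqsOf v).2.2 v) := by
    rintro ⟨h1, h2⟩
    rcases hj' with rfl|rfl|rfl <;> rcases hk' with rfl|rfl|rfl <;>
      first
        | exact hne rfl
        | exact hne h1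
        | exact hne h2
        | exact hne (h1.trans h2)
        | exact hne h1.symm
        | exact hne h2.symm
        | exact hne (h1.trans h2).symm
  exact agree_card_le _ _ _ A v hna

/-- An explicit optimal symmetric strategy. -/
def A0 : Fin 15 → Fin 15 → ZMod 2
  | 12 => fun m => if m = 6 then 1 else 0
  | 13 => fun m => if m = 7 then 1 else 0
  | 14 => fun m => if m = 8 then 1 else 0
  | _ => fun _ => 0

theorem ams_optimal_symmetric_value :
    (∀ A : Fin 15 → Fin 15 → ZMod 2, AMSwins A A ≤ 78) ∧
    (∃ A : Fin 15 → Fin 15 → ZMod 2, AMSwins A A = 78) := by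
  constructor
  · intro A
    have hAMS : AMSwins A A = (Pairs.filter (fun p =>
        (∑ m ∈ vars p.1, A p.1 m) = par p.1 ∧
        (∑ m ∈ vars p.2, A p.2 m) = par p.2 ∧
        ∀ m ∈ vars p.1 ∩ vars p.2, A p.1 m = A p.2 m)).card := rfl
    by_cases hok : ∀ j, (∑ m ∈ vars j, A j m) = par j
    · -- all parity constraints hold: find three distinct bad variables
      obtain ⟨v1, j1, k1, hj1S, hk1S, hvj1, hvk1, hne1⟩ :=
        kernel_bad A (certAt (certIdx 0 0)) (cert_props _).1 (cert_props _).2 hok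
      obtain ⟨v2, j2, k2, hj2S, hk2S, hvj2, hvk2, hne2⟩ :=
        kernel_bad A (certAt (certIdx v1 v1)) (cert_props _).1 (cert_props _).2 hok
      obtain ⟨v3, j3, k3, hj3S, hk3S, hvj3, hvk3, hne3⟩ :=
        kernel_bad A (certAt (certIdx v1 v2)) (cert_props _).1 (cert_props _).2 hok
      have h21 : v2 ≠ v1 := fun h => (cert_avoid v1 v1 j2 hj2S).1 (h ▸ hvj2)
      have h31 : v3 ≠ v1 := fun h => (cert_avoid v1 v2 j3 hj3S).1 (h ▸ hvj3)
      have h32 : v3 ≠ v2 := fun h => (cert_avoid v1 v2 j3 hj3S).2 (h ▸ hvj3)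
      set W : Fin 15 × Fin 15 → Prop := fun p =>
        (∑ m ∈ vars p.1, A p.1 m) = par p.1 ∧
        (∑ m ∈ vars p.2, A p.2 m) = par p.2 ∧
        ∀ m ∈ vars p.1 ∩ vars p.2, A p.1 m = A p.2 m with hWdef
      have hdec : (Pairs.filter W).card =
          ∑ m : Fin 15, ((Pairs.filter W).filter (fun p => shared p = m)).card :=
        Finset.card_eq_sum_card_fiberwise (fun p _ => Finset.mem_univ (shared p))
      have hgen : ∀ m : Fin 15,
          ((Pairs.filter W).filter (fun p => shared p = m)).card ≤ 6 := by
        intro m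
        calc ((Pairs.filter W).filter (fun p => shared p = m)).card
            ≤ (Pairs.filter (fun p => shared p = m)).card :=
              Finset.card_le_card
                (Finset.filter_subset_filter _ (Finset.filter_subset W Pairs))
          _ = 6 := fiber_card m
      have hbad : ∀ m ∈ ({v1, v2, v3} : Finset (Fin 15)),
          ((Pairs.filter W).filter (fun p => shared p = m)).card ≤ 2 := by
        intro m hm
        rcases Finset.mem_insert.mp hm with rfl | hm'
        · exact bad_two A m j1 k1 hvj1 hvk1 hne1
        rcases Finset.mem_insert.mp hm' with rfl | hm''
        · exact bad_two A m j2 k2 hvj2 hvk2 hne2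
        · rw [Finset.mem_singleton] at hm''
          subst hm''
          exact bad_two A m j3 k3 hvj3 hvk3 hne3
      have hcard3 : ({v1, v2, v3} : Finset (Fin 15)).card = 3 := by
        rw [Finset.card_insert_of_notMem (by simp [Ne.symm h21, Ne.symm h31]),
          Finset.card_insert_of_notMem (by simp [Ne.symm h32]),
          Finset.card_singleton]
      rw [hAMS, hdec, ← Finset.sum_add_sum_compl ({v1, v2, v3} : Finset (Fin 15))]
      have hA : ∑ m ∈ ({v1, v2, v3} : Finset (Fin 15)),
          ((Pairs.filter W).filter (fun p => shared p = m)).card ≤ 6 := by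
        calc ∑ m ∈ ({v1, v2, v3} : Finset (Fin 15)),
              ((Pairs.filter W).filter (fun p => shared p = m)).card
            ≤ ∑ _m ∈ ({v1, v2, v3} : Finset (Fin 15)), 2 :=
              Finset.sum_le_sum hbad
          _ = 6 := by rw [Finset.sum_const, hcard3]; rfl
      have hB : ∑ m ∈ ({v1, v2, v3} : Finset (Fin 15))ᶜ,
          ((Pairs.filter W).filter (fun p => shared p = m)).card ≤ 72 := by
        calc ∑ m ∈ ({v1, v2, v3} : Finset (Fin 15))ᶜ,
              ((Pairs.filter W).filter (fun p => shared p = m)).card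
            ≤ ∑ _m ∈ ({v1, v2, v3} : Finset (Fin 15))ᶜ, 6 :=
              Finset.sum_le_sum (fun m _ => hgen m)
          _ = 72 := by
              rw [Finset.sum_const, Finset.card_compl, hcard3]
              rfl
      omega
    · push_neg at hok
      obtain ⟨j0, hj0⟩ := hok
      have hsub : Pairs.filter (fun p =>
          (∑ m ∈ vars p.1, A p.1 m) = par p.1 ∧
          (∑ m ∈ vars p.2, A p.2 m) = par p.2 ∧
          ∀ m ∈ vars p.1 ∩ vars p.2, A p.1 m = A p.2 m) ⊆
          Pairs.filter (fun p => p.1 ≠ j0 ∧ p.2 ≠ j0) := by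
        intro p hp
        rw [Finset.mem_filter] at hp ⊢
        exact ⟨hp.1, fun h => hj0 (h ▸ hp.2.1), fun h => hj0 (h ▸ hp.2.2.1)⟩
      calc AMSwins A A
          ≤ (Pairs.filter (fun p => p.1 ≠ j0 ∧ p.2 ≠ j0)).card := by
            rw [hAMS]; exact Finset.card_le_card hsub
        _ = 78 := notok_card j0
  · exact ⟨A0, by decide⟩
end

section
/- Every optimal classical strategy for the AMS game is asymmetric: if AMSwins(A,B) = 80, then there exist j ∈ Fin 15 and m ∈ vars(j) with A j m ≠ B j m. -/
/-- The unique shared variable of a pair in `Pairs`. -/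
def ptOf (q : Fin 15 × Fin 15) : Fin 15 := (vars q.1 ∩ vars q.2).sum id

lemma z2 (x : ZMod 2) : x = 0 ∨ x = 1 := by revert x; decide

set_option maxRecDepth 40000 in
set_option maxHeartbeats 4000000 in
theorem ams_optimal_is_asymmetric (A B : Fin 15 → Fin 15 → ZMod 2)
    (h : AMSwins A B = 80) :
    ∃ j : Fin 15, ∃ m ∈ vars j, A j m ≠ B j m := by
  by_contra hcon
  push_neg at hcon
  have hBA : ∀ k : Fin 15, (∑ m ∈ vars k, B k m) = ∑ m ∈ vars k, A k m :=
    fun k => Finset.sum_congr rfl fun m hm => (hcon k m hm).symm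
  unfold AMSwins at h
  by_cases hpar : ∀ j : Fin 15, (∑ m ∈ vars j, A j m) = par j
  · -- all parities satisfied: count losses, divisible by 4
    have key : ∀ q ∈ Pairs, vars q.1 ∩ vars q.2 = {ptOf q} := by decide
    have hmem2 : ∀ q ∈ Pairs, ptOf q ∈ vars q.2 := by decide
    have hfe : (Pairs.filter fun p =>
        (∑ m ∈ vars p.1, A p.1 m) = par p.1 ∧
        (∑ m ∈ vars p.2, B p.2 m) = par p.2 ∧
        ∀ m ∈ vars p.1 ∩ vars p.2, A p.1 m = B p.2 m) =
        Pairs.filter fun q => ¬ (A q.1 (ptOf q) ≠ A q.2 (ptOf q)) := by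
      apply Finset.filter_congr
      intro q hq
      rw [key q hq]
      simp only [Finset.mem_singleton, not_not]
      constructor
      · rintro ⟨-, -, h3⟩
        exact (h3 _ rfl).trans (hcon q.2 _ (hmem2 q hq)).symm
      · intro hagree
        refine ⟨hpar q.1, (hBA q.2).trans (hpar q.2), ?_⟩
        rintro m rfl
        exact hagree.trans (hcon q.2 _ (hmem2 q hq))
    rw [hfe] at h
    have hsplit := Finset.card_filter_add_card_filter_not
      (s := Pairs) (p := fun q => A q.1 (ptOf q) ≠ A q.2 (ptOf q))
    have h90 : Pairs.card = 90 := by decide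
    have hdvd : 4 ∣ (Pairs.filter fun q => A q.1 (ptOf q) ≠ A q.2 (ptOf q)).card := by
      rw [Finset.card_eq_sum_card_fiberwise
        (f := ptOf) (t := Finset.univ) (fun q _ => Finset.mem_univ _)]
      refine Finset.dvd_sum ?_
      intro p _
      have hLp : (Pairs.filter fun q => A q.1 (ptOf q) ≠ A q.2 (ptOf q)).filter
          (fun q => ptOf q = p) =
          (Pairs.filter fun q => ptOf q = p).filter fun q => A q.1 p ≠ A q.2 p := by
        ext q
        simp only [Finset.mem_filter]
        constructor
        · rintro ⟨⟨h1, h2⟩, h3⟩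
          exact ⟨⟨h1, h3⟩, h3 ▸ h2⟩
        · rintro ⟨⟨h1, h3⟩, h2⟩
          exact ⟨⟨h1, h3 ▸ h2⟩, h3⟩
      rw [hLp]
      fin_cases p
      · show 4 ∣ ((Pairs.filter (fun q => ptOf q = (0:Fin 15))).filter
            (fun q => A q.1 (0:Fin 15) ≠ A q.2 (0:Fin 15))).card
        rw [show Pairs.filter (fun q => ptOf q = (0:Fin 15)) =
            ({(0,3),(3,0),(0,6),(6,0),(3,6),(6,3)} : Finset (Fin 15 × Fin 15)) from by decide]
        rcases z2 (A 0 0) with h1 | h1 <;> rcases z2 (A 3 0) with h2 | h2 <;>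
          rcases z2 (A 6 0) with h3 | h3 <;>
          simp [Finset.filter_insert, Finset.filter_singleton, h1, h2, h3]
      · show 4 ∣ ((Pairs.filter (fun q => ptOf q = (1:Fin 15))).filter
            (fun q => A q.1 (1:Fin 15) ≠ A q.2 (1:Fin 15))).card
        rw [show Pairs.filter (fun q => ptOf q = (1:Fin 15)) =
            ({(1,4),(4,1),(1,7),(7,1),(4,7),(7,4)} : Finset (Fin 15 × Fin 15)) from by decide]
        rcases z2 (A 1 1) with h1 | h1 <;> rcases z2 (A 4 1) with h2 | h2 <;>
          rcases z2 (A 7 1) with h3 | h3 <;>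
          simp [Finset.filter_insert, Finset.filter_singleton, h1, h2, h3]
      · show 4 ∣ ((Pairs.filter (fun q => ptOf q = (2:Fin 15))).filter
            (fun q => A q.1 (2:Fin 15) ≠ A q.2 (2:Fin 15))).card
        rw [show Pairs.filter (fun q => ptOf q = (2:Fin 15)) =
            ({(2,5),(5,2),(2,8),(8,2),(5,8),(8,5)} : Finset (Fin 15 × Fin 15)) from by decide]
        rcases z2 (A 2 2) with h1 | h1 <;> rcases z2 (A 5 2) with h2 | h2 <;>
          rcases z2 (A 8 2) with h3 | h3 <;>
          simp [Finset.filter_insert, Finset.filter_singleton, h1, h2, h3]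
      · show 4 ∣ ((Pairs.filter (fun q => ptOf q = (3:Fin 15))).filter
            (fun q => A q.1 (3:Fin 15) ≠ A q.2 (3:Fin 15))).card
        rw [show Pairs.filter (fun q => ptOf q = (3:Fin 15)) =
            ({(0,1),(1,0),(0,2),(2,0),(1,2),(2,1)} : Finset (Fin 15 × Fin 15)) from by decide]
        rcases z2 (A 0 3) with h1 | h1 <;> rcases z2 (A 1 3) with h2 | h2 <;>
          rcases z2 (A 2 3) with h3 | h3 <;>
          simp [Finset.filter_insert, Finset.filter_singleton, h1, h2, h3]
      · show 4 ∣ ((Pairs.filter (fun q => ptOf q = (4:Fin 15))).filter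
            (fun q => A q.1 (4:Fin 15) ≠ A q.2 (4:Fin 15))).card
        rw [show Pairs.filter (fun q => ptOf q = (4:Fin 15)) =
            ({(3,4),(4,3),(3,5),(5,3),(4,5),(5,4)} : Finset (Fin 15 × Fin 15)) from by decide]
        rcases z2 (A 3 4) with h1 | h1 <;> rcases z2 (A 4 4) with h2 | h2 <;>
          rcases z2 (A 5 4) with h3 | h3 <;>
          simp [Finset.filter_insert, Finset.filter_singleton, h1, h2, h3]
      · show 4 ∣ ((Pairs.filter (fun q => ptOf q = (5:Fin 15))).filter
            (fun q => A q.1 (5:Fin 15) ≠ A q.2 (5:Fin 15))).card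
        rw [show Pairs.filter (fun q => ptOf q = (5:Fin 15)) =
            ({(6,7),(7,6),(6,8),(8,6),(7,8),(8,7)} : Finset (Fin 15 × Fin 15)) from by decide]
        rcases z2 (A 6 5) with h1 | h1 <;> rcases z2 (A 7 5) with h2 | h2 <;>
          rcases z2 (A 8 5) with h3 | h3 <;>
          simp [Finset.filter_insert, Finset.filter_singleton, h1, h2, h3]
      · show 4 ∣ ((Pairs.filter (fun q => ptOf q = (6:Fin 15))).filter
            (fun q => A q.1 (6:Fin 15) ≠ A q.2 (6:Fin 15))).card
        rw [show Pairs.filter (fun q => ptOf q = (6:Fin 15)) =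
            ({(0,9),(9,0),(0,12),(12,0),(9,12),(12,9)} : Finset (Fin 15 × Fin 15)) from by decide]
        rcases z2 (A 0 6) with h1 | h1 <;> rcases z2 (A 9 6) with h2 | h2 <;>
          rcases z2 (A 12 6) with h3 | h3 <;>
          simp [Finset.filter_insert, Finset.filter_singleton, h1, h2, h3]
      · show 4 ∣ ((Pairs.filter (fun q => ptOf q = (7:Fin 15))).filter
            (fun q => A q.1 (7:Fin 15) ≠ A q.2 (7:Fin 15))).card
        rw [show Pairs.filter (fun q => ptOf q = (7:Fin 15)) =
            ({(1,11),(11,1),(1,13),(13,1),(11,13),(13,11)} : Finset (Fin 15 × Fin 15)) from by decide]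
        rcases z2 (A 1 7) with h1 | h1 <;> rcases z2 (A 11 7) with h2 | h2 <;>
          rcases z2 (A 13 7) with h3 | h3 <;>
          simp [Finset.filter_insert, Finset.filter_singleton, h1, h2, h3]
      · show 4 ∣ ((Pairs.filter (fun q => ptOf q = (8:Fin 15))).filter
            (fun q => A q.1 (8:Fin 15) ≠ A q.2 (8:Fin 15))).card
        rw [show Pairs.filter (fun q => ptOf q = (8:Fin 15)) =
            ({(2,10),(10,2),(2,14),(14,2),(10,14),(14,10)} : Finset (Fin 15 × Fin 15)) from by decide]
        rcases z2 (A 2 8) with h1 | h1 <;> rcases z2 (A 10 8) with h2 | h2 <;>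
          rcases z2 (A 14 8) with h3 | h3 <;>
          simp [Finset.filter_insert, Finset.filter_singleton, h1, h2, h3]
      · show 4 ∣ ((Pairs.filter (fun q => ptOf q = (9:Fin 15))).filter
            (fun q => A q.1 (9:Fin 15) ≠ A q.2 (9:Fin 15))).card
        rw [show Pairs.filter (fun q => ptOf q = (9:Fin 15)) =
            ({(3,11),(11,3),(3,14),(14,3),(11,14),(14,11)} : Finset (Fin 15 × Fin 15)) from by decide]
        rcases z2 (A 3 9) with h1 | h1 <;> rcases z2 (A 11 9) with h2 | h2 <;>
          rcases z2 (A 14 9) with h3 | h3 <;>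
          simp [Finset.filter_insert, Finset.filter_singleton, h1, h2, h3]
      · show 4 ∣ ((Pairs.filter (fun q => ptOf q = (10:Fin 15))).filter
            (fun q => A q.1 (10:Fin 15) ≠ A q.2 (10:Fin 15))).card
        rw [show Pairs.filter (fun q => ptOf q = (10:Fin 15)) =
            ({(4,10),(10,4),(4,12),(12,4),(10,12),(12,10)} : Finset (Fin 15 × Fin 15)) from by decide]
        rcases z2 (A 4 10) with h1 | h1 <;> rcases z2 (A 10 10) with h2 | h2 <;>
          rcases z2 (A 12 10) with h3 | h3 <;>
          simp [Finset.filter_insert, Finset.filter_singleton, h1, h2, h3]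
      · show 4 ∣ ((Pairs.filter (fun q => ptOf q = (11:Fin 15))).filter
            (fun q => A q.1 (11:Fin 15) ≠ A q.2 (11:Fin 15))).card
        rw [show Pairs.filter (fun q => ptOf q = (11:Fin 15)) =
            ({(5,9),(9,5),(5,13),(13,5),(9,13),(13,9)} : Finset (Fin 15 × Fin 15)) from by decide]
        rcases z2 (A 5 11) with h1 | h1 <;> rcases z2 (A 9 11) with h2 | h2 <;>
          rcases z2 (A 13 11) with h3 | h3 <;>
          simp [Finset.filter_insert, Finset.filter_singleton, h1, h2, h3]
      · show 4 ∣ ((Pairs.filter (fun q => ptOf q = (12:Fin 15))).filter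
            (fun q => A q.1 (12:Fin 15) ≠ A q.2 (12:Fin 15))).card
        rw [show Pairs.filter (fun q => ptOf q = (12:Fin 15)) =
            ({(6,10),(10,6),(6,13),(13,6),(10,13),(13,10)} : Finset (Fin 15 × Fin 15)) from by decide]
        rcases z2 (A 6 12) with h1 | h1 <;> rcases z2 (A 10 12) with h2 | h2 <;>
          rcases z2 (A 13 12) with h3 | h3 <;>
          simp [Finset.filter_insert, Finset.filter_singleton, h1, h2, h3]
      · show 4 ∣ ((Pairs.filter (fun q => ptOf q = (13:Fin 15))).filter
            (fun q => A q.1 (13:Fin 15) ≠ A q.2 (13:Fin 15))).card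
        rw [show Pairs.filter (fun q => ptOf q = (13:Fin 15)) =
            ({(7,9),(9,7),(7,14),(14,7),(9,14),(14,9)} : Finset (Fin 15 × Fin 15)) from by decide]
        rcases z2 (A 7 13) with h1 | h1 <;> rcases z2 (A 9 13) with h2 | h2 <;>
          rcases z2 (A 14 13) with h3 | h3 <;>
          simp [Finset.filter_insert, Finset.filter_singleton, h1, h2, h3]
      · show 4 ∣ ((Pairs.filter (fun q => ptOf q = (14:Fin 15))).filter
            (fun q => A q.1 (14:Fin 15) ≠ A q.2 (14:Fin 15))).card
        rw [show Pairs.filter (fun q => ptOf q = (14:Fin 15)) =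
            ({(8,11),(11,8),(8,12),(12,8),(11,12),(12,11)} : Finset (Fin 15 × Fin 15)) from by decide]
        rcases z2 (A 8 14) with h1 | h1 <;> rcases z2 (A 11 14) with h2 | h2 <;>
          rcases z2 (A 12 14) with h3 | h3 <;>
          simp [Finset.filter_insert, Finset.filter_singleton, h1, h2, h3]
    omega
  · -- some parity fails: at most 78 wins
    push_neg at hpar
    obtain ⟨j, hj⟩ := hpar
    have hsub : (Pairs.filter fun p =>
        (∑ m ∈ vars p.1, A p.1 m) = par p.1 ∧
        (∑ m ∈ vars p.2, B p.2 m) = par p.2 ∧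
        ∀ m ∈ vars p.1 ∩ vars p.2, A p.1 m = B p.2 m) ⊆
        Pairs.filter fun q => q.1 ≠ j ∧ q.2 ≠ j := by
      intro q hq
      simp only [Finset.mem_filter] at hq ⊢
      refine ⟨hq.1, ?_, ?_⟩
      · intro h1
        subst h1
        exact hj hq.2.1
      · intro h2
        subst h2
        exact hj ((hBA q.2).symm.trans hq.2.2.1)
    have hle := Finset.card_le_card hsub
    have h78 : ∀ i : Fin 15, (Pairs.filter fun q => q.1 ≠ i ∧ q.2 ≠ i).card = 78 := by
      decide
    have := h78 j
    omega
end

section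
/- Let A : Fin 15 → (Fin 15 → ZMod 2) define a symmetric strategy (A, A) for the AMS game that satisfies all parity constraints, i.e., ∑_{m ∈ vars(j)} A j m = par(j) for every j ∈ Fin 15. Let q be the number of variable indices m ∈ Fin 15 with a consistent assignment, i.e., such that A j m = A k m for all j, k with m ∈ vars(j) and m ∈ vars(k). Then AMSwins(A,A) = 30 + 4q; equivalently, the strategy wins the AMS game with probability (15 + 2q)/45. -/
set_option maxRecDepth 100000
set_option maxHeartbeats 1000000

/-- The equations owning a given variable. -/
def own (m : Fin 15) : Finset (Fin 15) := Finset.univ.filter fun j => m ∈ vars j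

/-- The ordered pairs of distinct equations both owning variable `m`. -/
def P (m : Fin 15) : Finset (Fin 15 × Fin 15) := (own m ×ˢ own m).filter fun p => p.1 ≠ p.2

def J1 : Fin 15 → Fin 15 := ![0,1,2,0,3,6,0,1,2,3,4,5,6,7,8]
def J2 : Fin 15 → Fin 15 := ![3,4,5,1,4,7,9,11,10,11,10,9,10,9,11]
def J3 : Fin 15 → Fin 15 := ![6,7,8,2,5,8,12,13,14,14,12,13,13,14,12]

lemma hP : ∀ m, P m = {(J1 m, J2 m),(J2 m,J1 m),(J1 m,J3 m),(J3 m,J1 m),(J2 m,J3 m),(J3 m,J2 m)} := by decide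
lemma hown : ∀ m, own m = {J1 m, J2 m, J3 m} := by decide
lemma hi12 : ∀ m, vars (J1 m) ∩ vars (J2 m) = {m} := by decide
lemma hi21 : ∀ m, vars (J2 m) ∩ vars (J1 m) = {m} := by decide
lemma hi13 : ∀ m, vars (J1 m) ∩ vars (J3 m) = {m} := by decide
lemma hi31 : ∀ m, vars (J3 m) ∩ vars (J1 m) = {m} := by decide
lemma hi23 : ∀ m, vars (J2 m) ∩ vars (J3 m) = {m} := by decide
lemma hi32 : ∀ m, vars (J3 m) ∩ vars (J2 m) = {m} := by decide
lemma hne : ∀ m, J1 m ≠ J2 m ∧ J1 m ≠ J3 m ∧ J2 m ≠ J3 m := by decide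
lemma hPairs : Pairs = Finset.univ.biUnion P := by decide
lemma hdisj : ∀ m : Fin 15, ∀ m' : Fin 15, m ≠ m' → Disjoint (P m) (P m') := by decide

lemma block (A : Fin 15 → Fin 15 → ZMod 2) (m : Fin 15) :
    ((P m).filter fun p => ∀ m' ∈ vars p.1 ∩ vars p.2, A p.1 m' = A p.2 m').card
      = 2 + 4 * (if A (J1 m) m = A (J2 m) m ∧ A (J1 m) m = A (J3 m) m then 1 else 0) := by
  obtain ⟨h12, h13, h23⟩ := hne m
  rw [hP m, Finset.card_filter]
  rw [Finset.sum_insert (by simp [Prod.ext_iff]; tauto),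
      Finset.sum_insert (by simp [Prod.ext_iff]; tauto),
      Finset.sum_insert (by simp [Prod.ext_iff]; tauto),
      Finset.sum_insert (by simp [Prod.ext_iff]; tauto),
      Finset.sum_insert (by simp [Prod.ext_iff]; tauto),
      Finset.sum_singleton]
  simp only [hi12, hi21, hi13, hi31, hi23, hi32, Finset.mem_singleton, forall_eq]
  generalize A (J1 m) m = x
  generalize A (J2 m) m = y
  generalize A (J3 m) m = z
  revert x y z
  decide

lemma qcond (A : Fin 15 → Fin 15 → ZMod 2) (m : Fin 15) :
    (∀ j k : Fin 15, m ∈ vars j → m ∈ vars k → A j m = A k m) ↔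
      (A (J1 m) m = A (J2 m) m ∧ A (J1 m) m = A (J3 m) m) := by
  have hmem : ∀ j, m ∈ vars j ↔ j ∈ own m := by simp [own]
  simp only [hmem, hown m, Finset.mem_insert, Finset.mem_singleton]
  constructor
  · intro h
    exact ⟨h _ _ (Or.inl rfl) (Or.inr (Or.inl rfl)), h _ _ (Or.inl rfl) (Or.inr (Or.inr rfl))⟩
  · rintro ⟨h1, h2⟩ j k (rfl|rfl|rfl) (rfl|rfl|rfl) <;> simp_all

theorem ams_symmetric_win_count (A : Fin 15 → Fin 15 → ZMod 2)
    (hpar : ∀ j : Fin 15, (∑ m ∈ vars j, A j m) = par j) :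
    AMSwins A A =
      30 + 4 * (Finset.univ.filter fun m : Fin 15 =>
        ∀ j k : Fin 15, m ∈ vars j → m ∈ vars k → A j m = A k m).card := by
  have hwins : AMSwins A A =
      (Pairs.filter fun p => ∀ m ∈ vars p.1 ∩ vars p.2, A p.1 m = A p.2 m).card := by
    unfold AMSwins
    congr 1
    apply Finset.filter_congr
    intro p _
    simp [hpar p.1, hpar p.2]
  have h1 : (Finset.univ.biUnion P).filter
      (fun p => ∀ m ∈ vars p.1 ∩ vars p.2, A p.1 m = A p.2 m) =
      Finset.univ.biUnion
        (fun m => (P m).filter fun p => ∀ m' ∈ vars p.1 ∩ vars p.2, A p.1 m' = A p.2 m') :=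
    Finset.filter_biUnion _ _ _
  have h2 : (Finset.univ.biUnion
        (fun m => (P m).filter fun p => ∀ m' ∈ vars p.1 ∩ vars p.2, A p.1 m' = A p.2 m')).card
      = ∑ m : Fin 15, ((P m).filter fun p => ∀ m' ∈ vars p.1 ∩ vars p.2, A p.1 m' = A p.2 m').card :=
    Finset.card_biUnion (fun m _ m' _ h => Finset.disjoint_filter_filter (hdisj m m' h))
  have h3 : (Finset.univ.filter fun m : Fin 15 =>
        ∀ j k : Fin 15, m ∈ vars j → m ∈ vars k → A j m = A k m).card
      = ∑ m : Fin 15, if A (J1 m) m = A (J2 m) m ∧ A (J1 m) m = A (J3 m) m then 1 else 0 := by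
    rw [Finset.card_filter]
    exact Finset.sum_congr rfl fun m _ => if_congr (qcond A m) rfl rfl
  rw [hwins, hPairs, h1, h2, h3]
  rw [Finset.sum_congr rfl (fun m _ => block A m)]
  rw [Finset.sum_add_distrib, Finset.sum_const, ← Finset.mul_sum]
  simp
end

section
/- Any optimal classical strategy for the AMS game wins at most 13 of the 15 synchronous questions: if AMSwins(A,B) = 80, then Syncwins(A,B) ≤ 13. -/
/-- The number of the 15 synchronous questions on which `(A, B)` wins: Alice's
answer satisfies the parity constraint and Bob's answer is identical on
the equation's variables. -/
def Syncwins (A B : Fin 15 → Fin 15 → ZMod 2) : ℕ :=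
  (Finset.univ.filter fun j : Fin 15 =>
    (∑ m ∈ vars j, A j m) = par j ∧ ∀ m ∈ vars j, A j m = B j m).card


def cfl (L : Fin 15 → Fin 15 → ZMod 2) (m : Fin 15) : Prop :=
  ∃ p ∈ Pairs, m ∈ vars p.1 ∩ vars p.2 ∧ L p.1 m ≠ L p.2 m

instance (L : Fin 15 → Fin 15 → ZMod 2) (m : Fin 15) : Decidable (cfl L m) := by
  unfold cfl; infer_instance

lemma not_cfl_eq (L : Fin 15 → Fin 15 → ZMod 2) (m u v : Fin 15) (h : ¬ cfl L m)
    (huv : (u,v) ∈ Pairs) (hm : m ∈ vars u ∩ vars v) : L u m = L v m := by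
  by_contra hne
  exact h ⟨(u,v), huv, hm, hne⟩

lemma sum3 (f : Fin 15 → ZMod 2) (a b c : Fin 15) (hab : a ≠ b) (hac : a ≠ c) (hbc : b ≠ c) :
    ∑ m ∈ ({a, b, c} : Finset (Fin 15)), f m = f a + f b + f c := by
  rw [show ({a,b,c} : Finset (Fin 15)) = insert a (insert b {c}) from rfl,
    Finset.sum_insert (by simp [hab, hac]), Finset.sum_insert (by simp [hbc]),
    Finset.sum_singleton, ← add_assoc]

lemma certAbs0 : ∀ x1 x2 x3 x4 x5 x6 x7 x8 x9 : ZMod 2, ¬(x1 + x3 + x6 = 0 ∧ x2 + x3 + x7 = 0 ∧ x1 + x4 + x8 = 0 ∧ x2 + x4 + x9 = 0 ∧ x5 + x7 + x8 = 0 ∧ x5 + x6 + x9 = 1) := by decide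

lemma cert0 (L : Fin 15 → Fin 15 → ZMod 2)
    (hpar : ∀ j, ∑ x ∈ vars j, L j x = par j)
    (hq : ∀ m ∈ ({1, 2, 4, 5, 6, 10, 11, 13, 14} : Finset (Fin 15)), ¬ cfl L m) : False := by
  have e1 : L 4 1 = L 7 1 := not_cfl_eq L 1 4 7 (hq 1 (by decide)) (by decide) (by decide)
  have e2 : L 5 2 = L 8 2 := not_cfl_eq L 2 5 8 (hq 2 (by decide)) (by decide) (by decide)
  have e4 : L 4 4 = L 5 4 := not_cfl_eq L 4 4 5 (hq 4 (by decide)) (by decide) (by decide)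
  have e5 : L 7 5 = L 8 5 := not_cfl_eq L 5 7 8 (hq 5 (by decide)) (by decide) (by decide)
  have e6 : L 9 6 = L 12 6 := not_cfl_eq L 6 9 12 (hq 6 (by decide)) (by decide) (by decide)
  have e10 : L 4 10 = L 12 10 := not_cfl_eq L 10 4 12 (hq 10 (by decide)) (by decide) (by decide)
  have e11 : L 5 11 = L 9 11 := not_cfl_eq L 11 5 9 (hq 11 (by decide)) (by decide) (by decide)
  have e13 : L 7 13 = L 9 13 := not_cfl_eq L 13 7 9 (hq 13 (by decide)) (by decide) (by decide)
  have e14 : L 8 14 = L 12 14 := not_cfl_eq L 14 8 12 (hq 14 (by decide)) (by decide) (by decide)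
  have h4 := hpar 4
  rw [show vars 4 = ({1, 4, 10} : Finset (Fin 15)) by decide, sum3 (L 4) 1 4 10 (by decide) (by decide) (by decide), show par 4 = 0 by decide] at h4
  rw [e1, e4, e10] at h4
  have h5 := hpar 5
  rw [show vars 5 = ({2, 4, 11} : Finset (Fin 15)) by decide, sum3 (L 5) 2 4 11 (by decide) (by decide) (by decide), show par 5 = 0 by decide] at h5
  rw [e2, e11] at h5
  have h7 := hpar 7
  rw [show vars 7 = ({1, 5, 13} : Finset (Fin 15)) by decide, sum3 (L 7) 1 5 13 (by decide) (by decide) (by decide), show par 7 = 0 by decide] at h7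
  rw [e5, e13] at h7
  have h8 := hpar 8
  rw [show vars 8 = ({2, 5, 14} : Finset (Fin 15)) by decide, sum3 (L 8) 2 5 14 (by decide) (by decide) (by decide), show par 8 = 0 by decide] at h8
  rw [e14] at h8
  have h9 := hpar 9
  rw [show vars 9 = ({6, 11, 13} : Finset (Fin 15)) by decide, sum3 (L 9) 6 11 13 (by decide) (by decide) (by decide), show par 9 = 0 by decide] at h9
  rw [e6] at h9
  have h12 := hpar 12
  rw [show vars 12 = ({6, 10, 14} : Finset (Fin 15)) by decide, sum3 (L 12) 6 10 14 (by decide) (by decide) (by decide), show par 12 = 1 by decide] at h12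
  exact certAbs0 _ _ _ _ _ _ _ _ _ ⟨h4, h5, h7, h8, h9, h12⟩

lemma certAbs1 : ∀ x1 x2 x3 x4 x5 x6 x7 x8 x9 : ZMod 2, ¬(x1 + x3 + x5 = 0 ∧ x2 + x3 + x6 = 0 ∧ x1 + x4 + x8 = 0 ∧ x2 + x4 + x9 = 0 ∧ x6 + x7 + x8 = 0 ∧ x5 + x7 + x9 = 1) := by decide

lemma cert1 (L : Fin 15 → Fin 15 → ZMod 2)
    (hpar : ∀ j, ∑ x ∈ vars j, L j x = par j)
    (hq : ∀ m ∈ ({0, 2, 3, 5, 6, 8, 10, 12, 14} : Finset (Fin 15)), ¬ cfl L m) : False := by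
  have e0 : L 0 0 = L 6 0 := not_cfl_eq L 0 0 6 (hq 0 (by decide)) (by decide) (by decide)
  have e2 : L 2 2 = L 8 2 := not_cfl_eq L 2 2 8 (hq 2 (by decide)) (by decide) (by decide)
  have e3 : L 0 3 = L 2 3 := not_cfl_eq L 3 0 2 (hq 3 (by decide)) (by decide) (by decide)
  have e5 : L 6 5 = L 8 5 := not_cfl_eq L 5 6 8 (hq 5 (by decide)) (by decide) (by decide)
  have e6 : L 0 6 = L 12 6 := not_cfl_eq L 6 0 12 (hq 6 (by decide)) (by decide) (by decide)
  have e8 : L 2 8 = L 10 8 := not_cfl_eq L 8 2 10 (hq 8 (by decide)) (by decide) (by decide)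
  have e10 : L 10 10 = L 12 10 := not_cfl_eq L 10 10 12 (hq 10 (by decide)) (by decide) (by decide)
  have e12 : L 6 12 = L 10 12 := not_cfl_eq L 12 6 10 (hq 12 (by decide)) (by decide) (by decide)
  have e14 : L 8 14 = L 12 14 := not_cfl_eq L 14 8 12 (hq 14 (by decide)) (by decide) (by decide)
  have h0 := hpar 0
  rw [show vars 0 = ({0, 3, 6} : Finset (Fin 15)) by decide, sum3 (L 0) 0 3 6 (by decide) (by decide) (by decide), show par 0 = 0 by decide] at h0
  rw [e0, e3, e6] at h0
  have h2 := hpar 2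
  rw [show vars 2 = ({2, 3, 8} : Finset (Fin 15)) by decide, sum3 (L 2) 2 3 8 (by decide) (by decide) (by decide), show par 2 = 0 by decide] at h2
  rw [e2, e8] at h2
  have h6 := hpar 6
  rw [show vars 6 = ({0, 5, 12} : Finset (Fin 15)) by decide, sum3 (L 6) 0 5 12 (by decide) (by decide) (by decide), show par 6 = 0 by decide] at h6
  rw [e5, e12] at h6
  have h8 := hpar 8
  rw [show vars 8 = ({2, 5, 14} : Finset (Fin 15)) by decide, sum3 (L 8) 2 5 14 (by decide) (by decide) (by decide), show par 8 = 0 by decide] at h8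
  rw [e14] at h8
  have h10 := hpar 10
  rw [show vars 10 = ({8, 10, 12} : Finset (Fin 15)) by decide, sum3 (L 10) 8 10 12 (by decide) (by decide) (by decide), show par 10 = 0 by decide] at h10
  rw [e10] at h10
  have h12 := hpar 12
  rw [show vars 12 = ({6, 10, 14} : Finset (Fin 15)) by decide, sum3 (L 12) 6 10 14 (by decide) (by decide) (by decide), show par 12 = 1 by decide] at h12
  exact certAbs1 _ _ _ _ _ _ _ _ _ ⟨h0, h2, h6, h8, h10, h12⟩

lemma certAbs2 : ∀ x1 x2 x3 x4 x5 x6 x7 x8 x9 : ZMod 2, ¬(x1 + x3 + x5 = 0 ∧ x2 + x3 + x6 = 0 ∧ x1 + x4 + x7 = 0 ∧ x2 + x4 + x8 = 0 ∧ x6 + x7 + x9 = 0 ∧ x5 + x8 + x9 = 1) := by decide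

lemma cert2 (L : Fin 15 → Fin 15 → ZMod 2)
    (hpar : ∀ j, ∑ x ∈ vars j, L j x = par j)
    (hq : ∀ m ∈ ({0, 1, 3, 4, 6, 7, 9, 10, 14} : Finset (Fin 15)), ¬ cfl L m) : False := by
  have e0 : L 0 0 = L 3 0 := not_cfl_eq L 0 0 3 (hq 0 (by decide)) (by decide) (by decide)
  have e1 : L 1 1 = L 4 1 := not_cfl_eq L 1 1 4 (hq 1 (by decide)) (by decide) (by decide)
  have e3 : L 0 3 = L 1 3 := not_cfl_eq L 3 0 1 (hq 3 (by decide)) (by decide) (by decide)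
  have e4 : L 3 4 = L 4 4 := not_cfl_eq L 4 3 4 (hq 4 (by decide)) (by decide) (by decide)
  have e6 : L 0 6 = L 12 6 := not_cfl_eq L 6 0 12 (hq 6 (by decide)) (by decide) (by decide)
  have e7 : L 1 7 = L 11 7 := not_cfl_eq L 7 1 11 (hq 7 (by decide)) (by decide) (by decide)
  have e9 : L 3 9 = L 11 9 := not_cfl_eq L 9 3 11 (hq 9 (by decide)) (by decide) (by decide)
  have e10 : L 4 10 = L 12 10 := not_cfl_eq L 10 4 12 (hq 10 (by decide)) (by decide) (by decide)
  have e14 : L 11 14 = L 12 14 := not_cfl_eq L 14 11 12 (hq 14 (by decide)) (by decide) (by decide)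
  have h0 := hpar 0
  rw [show vars 0 = ({0, 3, 6} : Finset (Fin 15)) by decide, sum3 (L 0) 0 3 6 (by decide) (by decide) (by decide), show par 0 = 0 by decide] at h0
  rw [e0, e3, e6] at h0
  have h1 := hpar 1
  rw [show vars 1 = ({1, 3, 7} : Finset (Fin 15)) by decide, sum3 (L 1) 1 3 7 (by decide) (by decide) (by decide), show par 1 = 0 by decide] at h1
  rw [e1, e7] at h1
  have h3 := hpar 3
  rw [show vars 3 = ({0, 4, 9} : Finset (Fin 15)) by decide, sum3 (L 3) 0 4 9 (by decide) (by decide) (by decide), show par 3 = 0 by decide] at h3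
  rw [e4, e9] at h3
  have h4 := hpar 4
  rw [show vars 4 = ({1, 4, 10} : Finset (Fin 15)) by decide, sum3 (L 4) 1 4 10 (by decide) (by decide) (by decide), show par 4 = 0 by decide] at h4
  rw [e10] at h4
  have h11 := hpar 11
  rw [show vars 11 = ({7, 9, 14} : Finset (Fin 15)) by decide, sum3 (L 11) 7 9 14 (by decide) (by decide) (by decide), show par 11 = 0 by decide] at h11
  rw [e14] at h11
  have h12 := hpar 12
  rw [show vars 12 = ({6, 10, 14} : Finset (Fin 15)) by decide, sum3 (L 12) 6 10 14 (by decide) (by decide) (by decide), show par 12 = 1 by decide] at h12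
  exact certAbs2 _ _ _ _ _ _ _ _ _ ⟨h0, h1, h3, h4, h11, h12⟩

lemma certAbs3 : ∀ x1 x2 x3 x4 x5 x6 x7 x8 x9 : ZMod 2, ¬(x1 + x3 + x5 = 0 ∧ x2 + x3 + x6 = 0 ∧ x1 + x4 + x8 = 0 ∧ x2 + x4 + x9 = 0 ∧ x5 + x7 + x9 = 0 ∧ x6 + x7 + x8 = 1) := by decide

lemma cert3 (L : Fin 15 → Fin 15 → ZMod 2)
    (hpar : ∀ j, ∑ x ∈ vars j, L j x = par j)
    (hq : ∀ m ∈ ({0, 1, 3, 5, 6, 7, 11, 12, 13} : Finset (Fin 15)), ¬ cfl L m) : False := by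
  have e0 : L 0 0 = L 6 0 := not_cfl_eq L 0 0 6 (hq 0 (by decide)) (by decide) (by decide)
  have e1 : L 1 1 = L 7 1 := not_cfl_eq L 1 1 7 (hq 1 (by decide)) (by decide) (by decide)
  have e3 : L 0 3 = L 1 3 := not_cfl_eq L 3 0 1 (hq 3 (by decide)) (by decide) (by decide)
  have e5 : L 6 5 = L 7 5 := not_cfl_eq L 5 6 7 (hq 5 (by decide)) (by decide) (by decide)
  have e6 : L 0 6 = L 9 6 := not_cfl_eq L 6 0 9 (hq 6 (by decide)) (by decide) (by decide)
  have e7 : L 1 7 = L 13 7 := not_cfl_eq L 7 1 13 (hq 7 (by decide)) (by decide) (by decide)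
  have e11 : L 9 11 = L 13 11 := not_cfl_eq L 11 9 13 (hq 11 (by decide)) (by decide) (by decide)
  have e12 : L 6 12 = L 13 12 := not_cfl_eq L 12 6 13 (hq 12 (by decide)) (by decide) (by decide)
  have e13 : L 7 13 = L 9 13 := not_cfl_eq L 13 7 9 (hq 13 (by decide)) (by decide) (by decide)
  have h0 := hpar 0
  rw [show vars 0 = ({0, 3, 6} : Finset (Fin 15)) by decide, sum3 (L 0) 0 3 6 (by decide) (by decide) (by decide), show par 0 = 0 by decide] at h0
  rw [e0, e3, e6] at h0
  have h1 := hpar 1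
  rw [show vars 1 = ({1, 3, 7} : Finset (Fin 15)) by decide, sum3 (L 1) 1 3 7 (by decide) (by decide) (by decide), show par 1 = 0 by decide] at h1
  rw [e1, e7] at h1
  have h6 := hpar 6
  rw [show vars 6 = ({0, 5, 12} : Finset (Fin 15)) by decide, sum3 (L 6) 0 5 12 (by decide) (by decide) (by decide), show par 6 = 0 by decide] at h6
  rw [e5, e12] at h6
  have h7 := hpar 7
  rw [show vars 7 = ({1, 5, 13} : Finset (Fin 15)) by decide, sum3 (L 7) 1 5 13 (by decide) (by decide) (by decide), show par 7 = 0 by decide] at h7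
  rw [e13] at h7
  have h9 := hpar 9
  rw [show vars 9 = ({6, 11, 13} : Finset (Fin 15)) by decide, sum3 (L 9) 6 11 13 (by decide) (by decide) (by decide), show par 9 = 0 by decide] at h9
  rw [e11] at h9
  have h13 := hpar 13
  rw [show vars 13 = ({7, 11, 12} : Finset (Fin 15)) by decide, sum3 (L 13) 7 11 12 (by decide) (by decide) (by decide), show par 13 = 1 by decide] at h13
  exact certAbs3 _ _ _ _ _ _ _ _ _ ⟨h0, h1, h6, h7, h9, h13⟩

lemma certAbs4 : ∀ x1 x2 x3 x4 x5 x6 x7 x8 x9 : ZMod 2, ¬(x1 + x3 + x5 = 0 ∧ x2 + x3 + x6 = 0 ∧ x1 + x4 + x7 = 0 ∧ x2 + x4 + x8 = 0 ∧ x6 + x7 + x9 = 0 ∧ x5 + x8 + x9 = 1) := by decide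

lemma cert4 (L : Fin 15 → Fin 15 → ZMod 2)
    (hpar : ∀ j, ∑ x ∈ vars j, L j x = par j)
    (hq : ∀ m ∈ ({1, 2, 3, 4, 7, 8, 10, 11, 12} : Finset (Fin 15)), ¬ cfl L m) : False := by
  have e1 : L 1 1 = L 4 1 := not_cfl_eq L 1 1 4 (hq 1 (by decide)) (by decide) (by decide)
  have e2 : L 2 2 = L 5 2 := not_cfl_eq L 2 2 5 (hq 2 (by decide)) (by decide) (by decide)
  have e3 : L 1 3 = L 2 3 := not_cfl_eq L 3 1 2 (hq 3 (by decide)) (by decide) (by decide)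
  have e4 : L 4 4 = L 5 4 := not_cfl_eq L 4 4 5 (hq 4 (by decide)) (by decide) (by decide)
  have e7 : L 1 7 = L 13 7 := not_cfl_eq L 7 1 13 (hq 7 (by decide)) (by decide) (by decide)
  have e8 : L 2 8 = L 10 8 := not_cfl_eq L 8 2 10 (hq 8 (by decide)) (by decide) (by decide)
  have e10 : L 4 10 = L 10 10 := not_cfl_eq L 10 4 10 (hq 10 (by decide)) (by decide) (by decide)
  have e11 : L 5 11 = L 13 11 := not_cfl_eq L 11 5 13 (hq 11 (by decide)) (by decide) (by decide)
  have e12 : L 10 12 = L 13 12 := not_cfl_eq L 12 10 13 (hq 12 (by decide)) (by decide) (by decide)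
  have h1 := hpar 1
  rw [show vars 1 = ({1, 3, 7} : Finset (Fin 15)) by decide, sum3 (L 1) 1 3 7 (by decide) (by decide) (by decide), show par 1 = 0 by decide] at h1
  rw [e1, e3, e7] at h1
  have h2 := hpar 2
  rw [show vars 2 = ({2, 3, 8} : Finset (Fin 15)) by decide, sum3 (L 2) 2 3 8 (by decide) (by decide) (by decide), show par 2 = 0 by decide] at h2
  rw [e2, e8] at h2
  have h4 := hpar 4
  rw [show vars 4 = ({1, 4, 10} : Finset (Fin 15)) by decide, sum3 (L 4) 1 4 10 (by decide) (by decide) (by decide), show par 4 = 0 by decide] at h4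
  rw [e4, e10] at h4
  have h5 := hpar 5
  rw [show vars 5 = ({2, 4, 11} : Finset (Fin 15)) by decide, sum3 (L 5) 2 4 11 (by decide) (by decide) (by decide), show par 5 = 0 by decide] at h5
  rw [e11] at h5
  have h10 := hpar 10
  rw [show vars 10 = ({8, 10, 12} : Finset (Fin 15)) by decide, sum3 (L 10) 8 10 12 (by decide) (by decide) (by decide), show par 10 = 0 by decide] at h10
  rw [e12] at h10
  have h13 := hpar 13
  rw [show vars 13 = ({7, 11, 12} : Finset (Fin 15)) by decide, sum3 (L 13) 7 11 12 (by decide) (by decide) (by decide), show par 13 = 1 by decide] at h13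
  exact certAbs4 _ _ _ _ _ _ _ _ _ ⟨h1, h2, h4, h5, h10, h13⟩

lemma certAbs5 : ∀ x1 x2 x3 x4 x5 x6 x7 x8 x9 : ZMod 2, ¬(x1 + x3 + x6 = 0 ∧ x2 + x3 + x7 = 0 ∧ x1 + x4 + x8 = 0 ∧ x2 + x4 + x9 = 0 ∧ x5 + x6 + x9 = 0 ∧ x5 + x7 + x8 = 1) := by decide

lemma cert5 (L : Fin 15 → Fin 15 → ZMod 2)
    (hpar : ∀ j, ∑ x ∈ vars j, L j x = par j)
    (hq : ∀ m ∈ ({0, 2, 4, 5, 7, 9, 11, 12, 14} : Finset (Fin 15)), ¬ cfl L m) : False := by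
  have e0 : L 3 0 = L 6 0 := not_cfl_eq L 0 3 6 (hq 0 (by decide)) (by decide) (by decide)
  have e2 : L 5 2 = L 8 2 := not_cfl_eq L 2 5 8 (hq 2 (by decide)) (by decide) (by decide)
  have e4 : L 3 4 = L 5 4 := not_cfl_eq L 4 3 5 (hq 4 (by decide)) (by decide) (by decide)
  have e5 : L 6 5 = L 8 5 := not_cfl_eq L 5 6 8 (hq 5 (by decide)) (by decide) (by decide)
  have e7 : L 11 7 = L 13 7 := not_cfl_eq L 7 11 13 (hq 7 (by decide)) (by decide) (by decide)
  have e9 : L 3 9 = L 11 9 := not_cfl_eq L 9 3 11 (hq 9 (by decide)) (by decide) (by decide)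
  have e11 : L 5 11 = L 13 11 := not_cfl_eq L 11 5 13 (hq 11 (by decide)) (by decide) (by decide)
  have e12 : L 6 12 = L 13 12 := not_cfl_eq L 12 6 13 (hq 12 (by decide)) (by decide) (by decide)
  have e14 : L 8 14 = L 11 14 := not_cfl_eq L 14 8 11 (hq 14 (by decide)) (by decide) (by decide)
  have h3 := hpar 3
  rw [show vars 3 = ({0, 4, 9} : Finset (Fin 15)) by decide, sum3 (L 3) 0 4 9 (by decide) (by decide) (by decide), show par 3 = 0 by decide] at h3
  rw [e0, e4, e9] at h3
  have h5 := hpar 5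
  rw [show vars 5 = ({2, 4, 11} : Finset (Fin 15)) by decide, sum3 (L 5) 2 4 11 (by decide) (by decide) (by decide), show par 5 = 0 by decide] at h5
  rw [e2, e11] at h5
  have h6 := hpar 6
  rw [show vars 6 = ({0, 5, 12} : Finset (Fin 15)) by decide, sum3 (L 6) 0 5 12 (by decide) (by decide) (by decide), show par 6 = 0 by decide] at h6
  rw [e5, e12] at h6
  have h8 := hpar 8
  rw [show vars 8 = ({2, 5, 14} : Finset (Fin 15)) by decide, sum3 (L 8) 2 5 14 (by decide) (by decide) (by decide), show par 8 = 0 by decide] at h8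
  rw [e14] at h8
  have h11 := hpar 11
  rw [show vars 11 = ({7, 9, 14} : Finset (Fin 15)) by decide, sum3 (L 11) 7 9 14 (by decide) (by decide) (by decide), show par 11 = 0 by decide] at h11
  rw [e7] at h11
  have h13 := hpar 13
  rw [show vars 13 = ({7, 11, 12} : Finset (Fin 15)) by decide, sum3 (L 13) 7 11 12 (by decide) (by decide) (by decide), show par 13 = 1 by decide] at h13
  exact certAbs5 _ _ _ _ _ _ _ _ _ ⟨h3, h5, h6, h8, h11, h13⟩

lemma certAbs6 : ∀ x1 x2 x3 x4 x5 x6 x7 x8 x9 : ZMod 2, ¬(x1 + x3 + x5 = 0 ∧ x2 + x3 + x6 = 0 ∧ x1 + x4 + x7 = 0 ∧ x2 + x4 + x8 = 0 ∧ x5 + x8 + x9 = 0 ∧ x6 + x7 + x9 = 1) := by decide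

lemma cert6 (L : Fin 15 → Fin 15 → ZMod 2)
    (hpar : ∀ j, ∑ x ∈ vars j, L j x = par j)
    (hq : ∀ m ∈ ({0, 2, 3, 4, 6, 8, 9, 11, 13} : Finset (Fin 15)), ¬ cfl L m) : False := by
  have e0 : L 0 0 = L 3 0 := not_cfl_eq L 0 0 3 (hq 0 (by decide)) (by decide) (by decide)
  have e2 : L 2 2 = L 5 2 := not_cfl_eq L 2 2 5 (hq 2 (by decide)) (by decide) (by decide)
  have e3 : L 0 3 = L 2 3 := not_cfl_eq L 3 0 2 (hq 3 (by decide)) (by decide) (by decide)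
  have e4 : L 3 4 = L 5 4 := not_cfl_eq L 4 3 5 (hq 4 (by decide)) (by decide) (by decide)
  have e6 : L 0 6 = L 9 6 := not_cfl_eq L 6 0 9 (hq 6 (by decide)) (by decide) (by decide)
  have e8 : L 2 8 = L 14 8 := not_cfl_eq L 8 2 14 (hq 8 (by decide)) (by decide) (by decide)
  have e9 : L 3 9 = L 14 9 := not_cfl_eq L 9 3 14 (hq 9 (by decide)) (by decide) (by decide)
  have e11 : L 5 11 = L 9 11 := not_cfl_eq L 11 5 9 (hq 11 (by decide)) (by decide) (by decide)
  have e13 : L 9 13 = L 14 13 := not_cfl_eq L 13 9 14 (hq 13 (by decide)) (by decide) (by decide)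
  have h0 := hpar 0
  rw [show vars 0 = ({0, 3, 6} : Finset (Fin 15)) by decide, sum3 (L 0) 0 3 6 (by decide) (by decide) (by decide), show par 0 = 0 by decide] at h0
  rw [e0, e3, e6] at h0
  have h2 := hpar 2
  rw [show vars 2 = ({2, 3, 8} : Finset (Fin 15)) by decide, sum3 (L 2) 2 3 8 (by decide) (by decide) (by decide), show par 2 = 0 by decide] at h2
  rw [e2, e8] at h2
  have h3 := hpar 3
  rw [show vars 3 = ({0, 4, 9} : Finset (Fin 15)) by decide, sum3 (L 3) 0 4 9 (by decide) (by decide) (by decide), show par 3 = 0 by decide] at h3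
  rw [e4, e9] at h3
  have h5 := hpar 5
  rw [show vars 5 = ({2, 4, 11} : Finset (Fin 15)) by decide, sum3 (L 5) 2 4 11 (by decide) (by decide) (by decide), show par 5 = 0 by decide] at h5
  rw [e11] at h5
  have h9 := hpar 9
  rw [show vars 9 = ({6, 11, 13} : Finset (Fin 15)) by decide, sum3 (L 9) 6 11 13 (by decide) (by decide) (by decide), show par 9 = 0 by decide] at h9
  rw [e13] at h9
  have h14 := hpar 14
  rw [show vars 14 = ({8, 9, 13} : Finset (Fin 15)) by decide, sum3 (L 14) 8 9 13 (by decide) (by decide) (by decide), show par 14 = 1 by decide] at h14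
  exact certAbs6 _ _ _ _ _ _ _ _ _ ⟨h0, h2, h3, h5, h9, h14⟩

lemma certAbs7 : ∀ x1 x2 x3 x4 x5 x6 x7 x8 x9 : ZMod 2, ¬(x1 + x3 + x6 = 0 ∧ x2 + x3 + x7 = 0 ∧ x1 + x4 + x8 = 0 ∧ x2 + x4 + x9 = 0 ∧ x5 + x7 + x8 = 0 ∧ x5 + x6 + x9 = 1) := by decide

lemma cert7 (L : Fin 15 → Fin 15 → ZMod 2)
    (hpar : ∀ j, ∑ x ∈ vars j, L j x = par j)
    (hq : ∀ m ∈ ({0, 1, 4, 5, 8, 9, 10, 12, 13} : Finset (Fin 15)), ¬ cfl L m) : False := by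
  have e0 : L 3 0 = L 6 0 := not_cfl_eq L 0 3 6 (hq 0 (by decide)) (by decide) (by decide)
  have e1 : L 4 1 = L 7 1 := not_cfl_eq L 1 4 7 (hq 1 (by decide)) (by decide) (by decide)
  have e4 : L 3 4 = L 4 4 := not_cfl_eq L 4 3 4 (hq 4 (by decide)) (by decide) (by decide)
  have e5 : L 6 5 = L 7 5 := not_cfl_eq L 5 6 7 (hq 5 (by decide)) (by decide) (by decide)
  have e8 : L 10 8 = L 14 8 := not_cfl_eq L 8 10 14 (hq 8 (by decide)) (by decide) (by decide)
  have e9 : L 3 9 = L 14 9 := not_cfl_eq L 9 3 14 (hq 9 (by decide)) (by decide) (by decide)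
  have e10 : L 4 10 = L 10 10 := not_cfl_eq L 10 4 10 (hq 10 (by decide)) (by decide) (by decide)
  have e12 : L 6 12 = L 10 12 := not_cfl_eq L 12 6 10 (hq 12 (by decide)) (by decide) (by decide)
  have e13 : L 7 13 = L 14 13 := not_cfl_eq L 13 7 14 (hq 13 (by decide)) (by decide) (by decide)
  have h3 := hpar 3
  rw [show vars 3 = ({0, 4, 9} : Finset (Fin 15)) by decide, sum3 (L 3) 0 4 9 (by decide) (by decide) (by decide), show par 3 = 0 by decide] at h3
  rw [e0, e4, e9] at h3
  have h4 := hpar 4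
  rw [show vars 4 = ({1, 4, 10} : Finset (Fin 15)) by decide, sum3 (L 4) 1 4 10 (by decide) (by decide) (by decide), show par 4 = 0 by decide] at h4
  rw [e1, e10] at h4
  have h6 := hpar 6
  rw [show vars 6 = ({0, 5, 12} : Finset (Fin 15)) by decide, sum3 (L 6) 0 5 12 (by decide) (by decide) (by decide), show par 6 = 0 by decide] at h6
  rw [e5, e12] at h6
  have h7 := hpar 7
  rw [show vars 7 = ({1, 5, 13} : Finset (Fin 15)) by decide, sum3 (L 7) 1 5 13 (by decide) (by decide) (by decide), show par 7 = 0 by decide] at h7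
  rw [e13] at h7
  have h10 := hpar 10
  rw [show vars 10 = ({8, 10, 12} : Finset (Fin 15)) by decide, sum3 (L 10) 8 10 12 (by decide) (by decide) (by decide), show par 10 = 0 by decide] at h10
  rw [e8] at h10
  have h14 := hpar 14
  rw [show vars 14 = ({8, 9, 13} : Finset (Fin 15)) by decide, sum3 (L 14) 8 9 13 (by decide) (by decide) (by decide), show par 14 = 1 by decide] at h14
  exact certAbs7 _ _ _ _ _ _ _ _ _ ⟨h3, h4, h6, h7, h10, h14⟩

lemma certAbs8 : ∀ x1 x2 x3 x4 x5 x6 x7 x8 x9 : ZMod 2, ¬(x1 + x3 + x5 = 0 ∧ x2 + x3 + x6 = 0 ∧ x1 + x4 + x8 = 0 ∧ x2 + x4 + x9 = 0 ∧ x5 + x7 + x9 = 0 ∧ x6 + x7 + x8 = 1) := by decide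

lemma cert8 (L : Fin 15 → Fin 15 → ZMod 2)
    (hpar : ∀ j, ∑ x ∈ vars j, L j x = par j)
    (hq : ∀ m ∈ ({1, 2, 3, 5, 7, 8, 9, 13, 14} : Finset (Fin 15)), ¬ cfl L m) : False := by
  have e1 : L 1 1 = L 7 1 := not_cfl_eq L 1 1 7 (hq 1 (by decide)) (by decide) (by decide)
  have e2 : L 2 2 = L 8 2 := not_cfl_eq L 2 2 8 (hq 2 (by decide)) (by decide) (by decide)
  have e3 : L 1 3 = L 2 3 := not_cfl_eq L 3 1 2 (hq 3 (by decide)) (by decide) (by decide)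
  have e5 : L 7 5 = L 8 5 := not_cfl_eq L 5 7 8 (hq 5 (by decide)) (by decide) (by decide)
  have e7 : L 1 7 = L 11 7 := not_cfl_eq L 7 1 11 (hq 7 (by decide)) (by decide) (by decide)
  have e8 : L 2 8 = L 14 8 := not_cfl_eq L 8 2 14 (hq 8 (by decide)) (by decide) (by decide)
  have e9 : L 11 9 = L 14 9 := not_cfl_eq L 9 11 14 (hq 9 (by decide)) (by decide) (by decide)
  have e13 : L 7 13 = L 14 13 := not_cfl_eq L 13 7 14 (hq 13 (by decide)) (by decide) (by decide)
  have e14 : L 8 14 = L 11 14 := not_cfl_eq L 14 8 11 (hq 14 (by decide)) (by decide) (by decide)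
  have h1 := hpar 1
  rw [show vars 1 = ({1, 3, 7} : Finset (Fin 15)) by decide, sum3 (L 1) 1 3 7 (by decide) (by decide) (by decide), show par 1 = 0 by decide] at h1
  rw [e1, e3, e7] at h1
  have h2 := hpar 2
  rw [show vars 2 = ({2, 3, 8} : Finset (Fin 15)) by decide, sum3 (L 2) 2 3 8 (by decide) (by decide) (by decide), show par 2 = 0 by decide] at h2
  rw [e2, e8] at h2
  have h7 := hpar 7
  rw [show vars 7 = ({1, 5, 13} : Finset (Fin 15)) by decide, sum3 (L 7) 1 5 13 (by decide) (by decide) (by decide), show par 7 = 0 by decide] at h7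
  rw [e5, e13] at h7
  have h8 := hpar 8
  rw [show vars 8 = ({2, 5, 14} : Finset (Fin 15)) by decide, sum3 (L 8) 2 5 14 (by decide) (by decide) (by decide), show par 8 = 0 by decide] at h8
  rw [e14] at h8
  have h11 := hpar 11
  rw [show vars 11 = ({7, 9, 14} : Finset (Fin 15)) by decide, sum3 (L 11) 7 9 14 (by decide) (by decide) (by decide), show par 11 = 0 by decide] at h11
  rw [e9] at h11
  have h14 := hpar 14
  rw [show vars 14 = ({8, 9, 13} : Finset (Fin 15)) by decide, sum3 (L 14) 8 9 13 (by decide) (by decide) (by decide), show par 14 = 1 by decide] at h14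
  exact certAbs8 _ _ _ _ _ _ _ _ _ ⟨h1, h2, h7, h8, h11, h14⟩

lemma certAbs9 : ∀ x1 x2 x3 x4 x5 x6 x7 x8 x9 : ZMod 2, ¬(x1 + x6 + x8 = 0 ∧ x3 + x5 + x7 = 0 ∧ x2 + x4 + x9 = 0 ∧ x1 + x5 + x9 = 1 ∧ x2 + x6 + x7 = 1 ∧ x3 + x4 + x8 = 1) := by decide

lemma cert9 (L : Fin 15 → Fin 15 → ZMod 2)
    (hpar : ∀ j, ∑ x ∈ vars j, L j x = par j)
    (hq : ∀ m ∈ ({6, 7, 8, 9, 10, 11, 12, 13, 14} : Finset (Fin 15)), ¬ cfl L m) : False := by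
  have e6 : L 9 6 = L 12 6 := not_cfl_eq L 6 9 12 (hq 6 (by decide)) (by decide) (by decide)
  have e7 : L 11 7 = L 13 7 := not_cfl_eq L 7 11 13 (hq 7 (by decide)) (by decide) (by decide)
  have e8 : L 10 8 = L 14 8 := not_cfl_eq L 8 10 14 (hq 8 (by decide)) (by decide) (by decide)
  have e9 : L 11 9 = L 14 9 := not_cfl_eq L 9 11 14 (hq 9 (by decide)) (by decide) (by decide)
  have e10 : L 10 10 = L 12 10 := not_cfl_eq L 10 10 12 (hq 10 (by decide)) (by decide) (by decide)
  have e11 : L 9 11 = L 13 11 := not_cfl_eq L 11 9 13 (hq 11 (by decide)) (by decide) (by decide)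
  have e12 : L 10 12 = L 13 12 := not_cfl_eq L 12 10 13 (hq 12 (by decide)) (by decide) (by decide)
  have e13 : L 9 13 = L 14 13 := not_cfl_eq L 13 9 14 (hq 13 (by decide)) (by decide) (by decide)
  have e14 : L 11 14 = L 12 14 := not_cfl_eq L 14 11 12 (hq 14 (by decide)) (by decide) (by decide)
  have h9 := hpar 9
  rw [show vars 9 = ({6, 11, 13} : Finset (Fin 15)) by decide, sum3 (L 9) 6 11 13 (by decide) (by decide) (by decide), show par 9 = 0 by decide] at h9
  rw [e6, e11, e13] at h9
  have h10 := hpar 10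
  rw [show vars 10 = ({8, 10, 12} : Finset (Fin 15)) by decide, sum3 (L 10) 8 10 12 (by decide) (by decide) (by decide), show par 10 = 0 by decide] at h10
  rw [e8, e10, e12] at h10
  have h11 := hpar 11
  rw [show vars 11 = ({7, 9, 14} : Finset (Fin 15)) by decide, sum3 (L 11) 7 9 14 (by decide) (by decide) (by decide), show par 11 = 0 by decide] at h11
  rw [e7, e9, e14] at h11
  have h12 := hpar 12
  rw [show vars 12 = ({6, 10, 14} : Finset (Fin 15)) by decide, sum3 (L 12) 6 10 14 (by decide) (by decide) (by decide), show par 12 = 1 by decide] at h12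
  have h13 := hpar 13
  rw [show vars 13 = ({7, 11, 12} : Finset (Fin 15)) by decide, sum3 (L 13) 7 11 12 (by decide) (by decide) (by decide), show par 13 = 1 by decide] at h13
  have h14 := hpar 14
  rw [show vars 14 = ({8, 9, 13} : Finset (Fin 15)) by decide, sum3 (L 14) 8 9 13 (by decide) (by decide) (by decide), show par 14 = 1 by decide] at h14
  exact certAbs9 _ _ _ _ _ _ _ _ _ ⟨h9, h10, h11, h12, h13, h14⟩

def dvSet : Fin 10 → Finset (Fin 15)
  | 0 => {1, 2, 4, 5, 6, 10, 11, 13, 14}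
  | 1 => {0, 2, 3, 5, 6, 8, 10, 12, 14}
  | 2 => {0, 1, 3, 4, 6, 7, 9, 10, 14}
  | 3 => {0, 1, 3, 5, 6, 7, 11, 12, 13}
  | 4 => {1, 2, 3, 4, 7, 8, 10, 11, 12}
  | 5 => {0, 2, 4, 5, 7, 9, 11, 12, 14}
  | 6 => {0, 2, 3, 4, 6, 8, 9, 11, 13}
  | 7 => {0, 1, 4, 5, 8, 9, 10, 12, 13}
  | 8 => {1, 2, 3, 5, 7, 8, 9, 13, 14}
  | 9 => {6, 7, 8, 9, 10, 11, 12, 13, 14}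


lemma pick_cert : ∀ m1 m2 : Fin 15, ∃ i : Fin 10, m1 ∉ dvSet i ∧ m2 ∉ dvSet i := by decide

lemma cert_master (L : Fin 15 → Fin 15 → ZMod 2)
    (hpar : ∀ j, ∑ x ∈ vars j, L j x = par j) (i : Fin 10) :
    ∃ m ∈ dvSet i, cfl L m := by
  by_contra hc
  push_neg at hc
  fin_cases i
  · exact cert0 L hpar hc
  · exact cert1 L hpar hc
  · exact cert2 L hpar hc
  · exact cert3 L hpar hc
  · exact cert4 L hpar hc
  · exact cert5 L hpar hc
  · exact cert6 L hpar hc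
  · exact cert7 L hpar hc
  · exact cert8 L hpar hc
  · exact cert9 L hpar hc

lemma three_confl (L : Fin 15 → Fin 15 → ZMod 2)
    (hpar : ∀ j, ∑ x ∈ vars j, L j x = par j) :
    ∃ m1 m2 m3 : Fin 15, m1 ≠ m2 ∧ m1 ≠ m3 ∧ m2 ≠ m3 ∧ cfl L m1 ∧ cfl L m2 ∧ cfl L m3 := by
  obtain ⟨m1, _, hc1⟩ := cert_master L hpar 0
  obtain ⟨i2, hi2, -⟩ := pick_cert m1 m1
  obtain ⟨m2, hm2, hc2⟩ := cert_master L hpar i2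
  have h12 : m1 ≠ m2 := fun h => hi2 (h ▸ hm2)
  obtain ⟨i3, hi3a, hi3b⟩ := pick_cert m1 m2
  obtain ⟨m3, hm3, hc3⟩ := cert_master L hpar i3
  have h13 : m1 ≠ m3 := fun h => hi3a (h ▸ hm3)
  have h23 : m2 ≠ m3 := fun h => hi3b (h ▸ hm3)
  exact ⟨m1, m2, m3, h12, h13, h23, hc1, hc2, hc3⟩


def winP (A B : Fin 15 → Fin 15 → ZMod 2) (p : Fin 15 × Fin 15) : Prop :=
  (∑ m ∈ vars p.1, A p.1 m) = par p.1 ∧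
  (∑ m ∈ vars p.2, B p.2 m) = par p.2 ∧
  ∀ m ∈ vars p.1 ∩ vars p.2, A p.1 m = B p.2 m

instance (A B : Fin 15 → Fin 15 → ZMod 2) : DecidablePred (winP A B) := fun p => by
  unfold winP; infer_instance

def LB (A B : Fin 15 → Fin 15 → ZMod 2) (j₀ : Fin 15) : Fin 15 → Fin 15 → ZMod 2 :=
  fun j x => if j = j₀ then B j x else A j x

lemma card4 {α : Type*} [DecidableEq α] {p q r s : α} (h1 : p ≠ q) (h2 : p ≠ r) (h3 : p ≠ s)
    (h4 : q ≠ r) (h5 : q ≠ s) (h6 : r ≠ s) : ({p, q, r, s} : Finset α).card = 4 := by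
  rw [Finset.card_insert_of_notMem (by simp [h1, h2, h3]),
    Finset.card_insert_of_notMem (by simp [h4, h5]), Finset.card_pair h6]

lemma count_bound (A B : Fin 15 → Fin 15 → ZMod 2) (j1 j2 j3 m : Fin 15)
    (h12 : j1 ≠ j2) (h13 : j1 ≠ j3) (h23 : j2 ≠ j3)
    (htr : ∀ j, m ∈ vars j → j = j1 ∨ j = j2 ∨ j = j3)
    (LS : Finset (Fin 15 × Fin 15))
    (hsub : LS ⊆ {(j1,j2),(j2,j1),(j1,j3),(j3,j1),(j2,j3),(j3,j2)})
    (hlost : ∀ q ∈ LS, ¬ winP A B q) (k : ℕ) (hk : k ≤ LS.card) :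
    ((Pairs.filter (winP A B)).filter (fun p => m ∈ vars p.1 ∩ vars p.2)).card + k ≤ 6 := by
  have h21 := h12.symm
  have h31 := h13.symm
  have h32 := h23.symm
  set six : Finset (Fin 15 × Fin 15) := {(j1,j2),(j2,j1),(j1,j3),(j3,j1),(j2,j3),(j3,j2)} with hsix
  have hsixcard : six.card = 6 := by
    rw [hsix, Finset.card_insert_of_notMem (by simp [Prod.ext_iff]; tauto),
      Finset.card_insert_of_notMem (by simp [Prod.ext_iff]; tauto),
      Finset.card_insert_of_notMem (by simp [Prod.ext_iff]; tauto),
      Finset.card_insert_of_notMem (by simp [Prod.ext_iff]; tauto),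
      Finset.card_pair (by simp [Prod.ext_iff]; tauto)]
  have hmain : (Pairs.filter (winP A B)).filter (fun p => m ∈ vars p.1 ∩ vars p.2) ⊆ six \ LS := by
    intro p hp
    obtain ⟨u, v⟩ := p
    simp only [Finset.mem_filter] at hp
    obtain ⟨⟨hpP, hw⟩, hm⟩ := hp
    have hne : u ≠ v := (Finset.mem_filter.mp hpP).2.1
    have hmu : m ∈ vars u := (Finset.mem_inter.mp hm).1
    have hmv : m ∈ vars v := (Finset.mem_inter.mp hm).2
    have hmem : (u, v) ∈ six := by
      rw [hsix]
      rcases htr u hmu with rfl | rfl | rfl <;> rcases htr v hmv with rfl | rfl | rfl <;>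
        first | exact absurd rfl hne | simp
    exact Finset.mem_sdiff.mpr ⟨hmem, fun hin => hlost _ hin hw⟩
  have h1 : ((Pairs.filter (winP A B)).filter (fun p => m ∈ vars p.1 ∩ vars p.2)).card ≤ (six \ LS).card :=
    Finset.card_le_card hmain
  have h2 : (six \ LS).card = six.card - LS.card := Finset.card_sdiff_of_subset hsub
  have h3 : LS.card ≤ six.card := Finset.card_le_card hsub
  omega


set_option maxHeartbeats 1600000 in
lemma core (A B : Fin 15 → Fin 15 → ZMod 2) (j₀ j1 j2 j3 m : Fin 15) (sA sB : ℕ)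
    (h12 : j1 ≠ j2) (h13 : j1 ≠ j3) (h23 : j2 ≠ j3)
    (hv12 : vars j1 ∩ vars j2 = {m}) (hv21 : vars j2 ∩ vars j1 = {m})
    (hv13 : vars j1 ∩ vars j3 = {m}) (hv31 : vars j3 ∩ vars j1 = {m})
    (hv23 : vars j2 ∩ vars j3 = {m}) (hv32 : vars j3 ∩ vars j2 = {m})
    (hm1 : m ∈ vars j1) (hm2 : m ∈ vars j2) (hm3 : m ∈ vars j3)
    (htr : ∀ j, m ∈ vars j → j = j1 ∨ j = j2 ∨ j = j3)
    (hj : j₀ = j1 ∨ m ∉ vars j₀)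
    (hsync : ∀ j, j ≠ j₀ → ((∑ x ∈ vars j, A j x) = par j ∧ ∀ x ∈ vars j, A j x = B j x))
    (hsA : sA = 0 ∨ (sA = 2 ∧
      (¬(A j1 m = A j2 m ∧ A j2 m = A j3 m ∧ A j1 m = A j3 m) ∨
       ((∑ x ∈ vars j₀, A j₀ x) ≠ par j₀ ∧ j₀ = j1))))
    (hsB : sB = 0 ∨ (sB = 2 ∧
      (¬(LB A B j₀ j1 m = LB A B j₀ j2 m ∧ LB A B j₀ j2 m = LB A B j₀ j3 m ∧
          LB A B j₀ j1 m = LB A B j₀ j3 m) ∨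
       ((∑ x ∈ vars j₀, B j₀ x) ≠ par j₀ ∧ j₀ = j1)))) :
    ((Pairs.filter (winP A B)).filter (fun p => m ∈ vars p.1 ∩ vars p.2)).card + sA + sB ≤ 6 := by
  have hj2 : j2 ≠ j₀ := by
    rcases hj with h1 | hmv
    · rw [h1]; exact h12.symm
    · intro hh; rw [hh] at hm2; exact hmv hm2
  have hj3 : j3 ≠ j₀ := by
    rcases hj with h1 | hmv
    · rw [h1]; exact h13.symm
    · intro hh; rw [hh] at hm3; exact hmv hm3
  have hB2 : B j2 m = A j2 m := ((hsync j2 hj2).2 m hm2).symm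
  have hB3 : B j3 m = A j3 m := ((hsync j3 hj3).2 m hm3).symm
  have hLB1 : LB A B j₀ j1 m = B j1 m := by
    unfold LB
    by_cases hh : j1 = j₀
    · rw [if_pos hh]
    · rw [if_neg hh]; exact (hsync j1 hh).2 m hm1
  have hLB2 : LB A B j₀ j2 m = A j2 m := by unfold LB; rw [if_neg hj2]
  have hLB3 : LB A B j₀ j3 m = A j3 m := by unfold LB; rw [if_neg hj3]
  have lostag : ∀ u v : Fin 15, vars u ∩ vars v = {m} → A u m ≠ B v m → ¬ winP A B (u, v) := by
    intro u v hv hne hw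
    exact hne (hw.2.2 m (by rw [hv]; exact Finset.mem_singleton_self m))
  have hA : sA = 0 ∨ (sA = 2 ∧ ∃ q1 q2 : Fin 15 × Fin 15, q1 ≠ q2 ∧
      q1 ∈ ({(j2,j3),(j1,j2),(j1,j3)} : Finset (Fin 15 × Fin 15)) ∧
      q2 ∈ ({(j2,j3),(j1,j2),(j1,j3)} : Finset (Fin 15 × Fin 15)) ∧
      ¬ winP A B q1 ∧ ¬ winP A B q2) := by
    rcases hsA with hh | ⟨hs2, hr⟩
    · exact Or.inl hh
    refine Or.inr ⟨hs2, ?_⟩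
    rcases hr with hall | ⟨hpa, hj1⟩
    · by_cases h23v : A j2 m = A j3 m
      · have h12v : A j1 m ≠ A j2 m := fun hh => hall ⟨hh, h23v, hh.trans h23v⟩
        have h13v : A j1 m ≠ A j3 m := fun hh => h12v (hh.trans h23v.symm)
        exact ⟨(j1,j2), (j1,j3), fun hh => h23 (congrArg Prod.snd hh), by simp, by simp,
          lostag j1 j2 hv12 (by rw [hB2]; exact h12v),
          lostag j1 j3 hv13 (by rw [hB3]; exact h13v)⟩
      · by_cases hw : A j1 m = A j2 m
        · exact ⟨(j2,j3), (j1,j3), fun hh => h12 (congrArg Prod.fst hh).symm, by simp, by simp,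
            lostag j2 j3 hv23 (by rw [hB3]; exact h23v),
            lostag j1 j3 hv13 (by rw [hB3]; exact fun hh => h23v (hw.symm.trans hh))⟩
        · exact ⟨(j2,j3), (j1,j2), fun hh => h12 (congrArg Prod.fst hh).symm, by simp, by simp,
            lostag j2 j3 hv23 (by rw [hB3]; exact h23v),
            lostag j1 j2 hv12 (by rw [hB2]; exact hw)⟩
    · refine ⟨(j1,j2), (j1,j3), fun hh => h23 (congrArg Prod.snd hh), by simp, by simp,
        fun hw => hpa ?_, fun hw => hpa ?_⟩
      · rw [hj1]; exact hw.1
      · rw [hj1]; exact hw.1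
  have hB : sB = 0 ∨ (sB = 2 ∧ ∃ r1 r2 : Fin 15 × Fin 15, r1 ≠ r2 ∧
      r1 ∈ ({(j3,j2),(j2,j1),(j3,j1)} : Finset (Fin 15 × Fin 15)) ∧
      r2 ∈ ({(j3,j2),(j2,j1),(j3,j1)} : Finset (Fin 15 × Fin 15)) ∧
      ¬ winP A B r1 ∧ ¬ winP A B r2) := by
    rcases hsB with hh | ⟨hs2, hr⟩
    · exact Or.inl hh
    refine Or.inr ⟨hs2, ?_⟩
    rcases hr with hall | ⟨hpb, hj1⟩
    · rw [hLB1, hLB2, hLB3] at hall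
      by_cases h23v : A j2 m = A j3 m
      · have hne1 : A j2 m ≠ B j1 m := fun hh => hall ⟨hh.symm, h23v, hh.symm.trans h23v⟩
        have hne2 : A j3 m ≠ B j1 m := fun hh => hne1 (h23v.trans hh)
        exact ⟨(j2,j1), (j3,j1), fun hh => h23 (congrArg Prod.fst hh), by simp, by simp,
          lostag j2 j1 hv21 hne1, lostag j3 j1 hv31 hne2⟩
      · by_cases hw : B j1 m = A j2 m
        · exact ⟨(j3,j2), (j3,j1), fun hh => h12 (congrArg Prod.snd hh).symm, by simp, by simp,
            lostag j3 j2 hv32 (by rw [hB2]; exact fun hh => h23v hh.symm),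
            lostag j3 j1 hv31 (fun hh => h23v (hw ▸ hh).symm)⟩
        · exact ⟨(j3,j2), (j2,j1), fun hh => h23 (congrArg Prod.fst hh).symm, by simp, by simp,
            lostag j3 j2 hv32 (by rw [hB2]; exact fun hh => h23v hh.symm),
            lostag j2 j1 hv21 (fun hh => hw hh.symm)⟩
    · refine ⟨(j2,j1), (j3,j1), fun hh => h23 (congrArg Prod.fst hh), by simp, by simp,
        fun hw => hpb ?_, fun hw => hpb ?_⟩
      · rw [hj1]; exact hw.2.1
      · rw [hj1]; exact hw.2.1
  have hdisj : ∀ x : Fin 15 × Fin 15, x ∈ ({(j2,j3),(j1,j2),(j1,j3)} : Finset (Fin 15 × Fin 15)) →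
      x ∉ ({(j3,j2),(j2,j1),(j3,j1)} : Finset (Fin 15 × Fin 15)) := by
    intro x hx hy
    simp only [Finset.mem_insert, Finset.mem_singleton] at hx hy
    rcases hx with rfl | rfl | rfl <;> rcases hy with hh | hh | hh <;>
      first
      | exact h12 (congrArg Prod.fst hh)
      | exact h13 (congrArg Prod.fst hh)
      | exact h23 (congrArg Prod.fst hh)
      | exact h12 (congrArg Prod.fst hh).symm
      | exact h13 (congrArg Prod.fst hh).symm
      | exact h23 (congrArg Prod.fst hh).symm
      | exact h12 (congrArg Prod.snd hh)
      | exact h13 (congrArg Prod.snd hh)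
      | exact h23 (congrArg Prod.snd hh)
      | exact h12 (congrArg Prod.snd hh).symm
      | exact h13 (congrArg Prod.snd hh).symm
      | exact h23 (congrArg Prod.snd hh).symm
  have hsubA : ({(j2,j3),(j1,j2),(j1,j3)} : Finset (Fin 15 × Fin 15)) ⊆
      {(j1,j2),(j2,j1),(j1,j3),(j3,j1),(j2,j3),(j3,j2)} := by
    intro x hx
    simp only [Finset.mem_insert, Finset.mem_singleton] at hx
    rcases hx with rfl | rfl | rfl
    · exact Finset.mem_insert_of_mem (Finset.mem_insert_of_mem (Finset.mem_insert_of_mem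
        (Finset.mem_insert_of_mem (Finset.mem_insert_self _ _))))
    · exact Finset.mem_insert_self _ _
    · exact Finset.mem_insert_of_mem (Finset.mem_insert_of_mem (Finset.mem_insert_self _ _))
  have hsubB : ({(j3,j2),(j2,j1),(j3,j1)} : Finset (Fin 15 × Fin 15)) ⊆
      {(j1,j2),(j2,j1),(j1,j3),(j3,j1),(j2,j3),(j3,j2)} := by
    intro x hx
    simp only [Finset.mem_insert, Finset.mem_singleton] at hx
    rcases hx with rfl | rfl | rfl
    · exact Finset.mem_insert_of_mem (Finset.mem_insert_of_mem (Finset.mem_insert_of_mem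
        (Finset.mem_insert_of_mem (Finset.mem_insert_of_mem (Finset.mem_singleton_self _)))))
    · exact Finset.mem_insert_of_mem (Finset.mem_insert_self _ _)
    · exact Finset.mem_insert_of_mem (Finset.mem_insert_of_mem (Finset.mem_insert_of_mem
        (Finset.mem_insert_self _ _)))
  rcases hA with hA0 | ⟨hA2, q1, q2, hqne, hq1, hq2, hl1, hl2⟩ <;>
    rcases hB with hB0 | ⟨hB2', r1, r2, hrne, hr1, hr2, gl1, gl2⟩
  · subst hA0; subst hB0
    have := count_bound A B j1 j2 j3 m h12 h13 h23 htr ∅ (Finset.empty_subset _)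
      (by simp) 0 (by simp)
    omega
  · subst hA0; subst hB2'
    have hLS : ∀ q ∈ ({r1, r2} : Finset (Fin 15 × Fin 15)), ¬ winP A B q := by
      intro q hq; simp only [Finset.mem_insert, Finset.mem_singleton] at hq
      rcases hq with rfl | rfl
      · exact gl1
      · exact gl2
    have := count_bound A B j1 j2 j3 m h12 h13 h23 htr {r1, r2}
      (fun x hx => by
        simp only [Finset.mem_insert, Finset.mem_singleton] at hx
        rcases hx with rfl | rfl
        · exact hsubB hr1
        · exact hsubB hr2) hLS 2 (by rw [Finset.card_pair hrne])
    omega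
  · subst hA2; subst hB0
    have hLS : ∀ q ∈ ({q1, q2} : Finset (Fin 15 × Fin 15)), ¬ winP A B q := by
      intro q hq; simp only [Finset.mem_insert, Finset.mem_singleton] at hq
      rcases hq with rfl | rfl
      · exact hl1
      · exact hl2
    have := count_bound A B j1 j2 j3 m h12 h13 h23 htr {q1, q2}
      (fun x hx => by
        simp only [Finset.mem_insert, Finset.mem_singleton] at hx
        rcases hx with rfl | rfl
        · exact hsubA hq1
        · exact hsubA hq2) hLS 2 (by rw [Finset.card_pair hqne])
    omega
  · subst hA2; subst hB2'
    have hq1r1 : q1 ≠ r1 := fun hh => hdisj q1 hq1 (hh ▸ hr1)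
    have hq1r2 : q1 ≠ r2 := fun hh => hdisj q1 hq1 (hh ▸ hr2)
    have hq2r1 : q2 ≠ r1 := fun hh => hdisj q2 hq2 (hh ▸ hr1)
    have hq2r2 : q2 ≠ r2 := fun hh => hdisj q2 hq2 (hh ▸ hr2)
    have hLS : ∀ q ∈ ({q1, q2, r1, r2} : Finset (Fin 15 × Fin 15)), ¬ winP A B q := by
      intro q hq; simp only [Finset.mem_insert, Finset.mem_singleton] at hq
      rcases hq with rfl | rfl | rfl | rfl
      · exact hl1
      · exact hl2
      · exact gl1
      · exact gl2
    have := count_bound A B j1 j2 j3 m h12 h13 h23 htr {q1, q2, r1, r2}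
      (fun x hx => by
        simp only [Finset.mem_insert, Finset.mem_singleton] at hx
        rcases hx with rfl | rfl | rfl | rfl
        · exact hsubA hq1
        · exact hsubA hq2
        · exact hsubB hr1
        · exact hsubB hr2) hLS 4
      (by rw [card4 hqne hq1r1 hq1r2 hq2r1 hq2r2 hrne])
    omega


def triProp (m : Fin 15) (t : Fin 15 × Fin 15 × Fin 15) : Prop :=
  t.1 ≠ t.2.1 ∧ t.1 ≠ t.2.2 ∧ t.2.1 ≠ t.2.2 ∧
  m ∈ vars t.1 ∧ m ∈ vars t.2.1 ∧ m ∈ vars t.2.2 ∧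
  vars t.1 ∩ vars t.2.1 = {m} ∧ vars t.2.1 ∩ vars t.1 = {m} ∧
  vars t.1 ∩ vars t.2.2 = {m} ∧ vars t.2.2 ∩ vars t.1 = {m} ∧
  vars t.2.1 ∩ vars t.2.2 = {m} ∧ vars t.2.2 ∩ vars t.2.1 = {m} ∧
  ∀ j, m ∈ vars j → j = t.1 ∨ j = t.2.1 ∨ j = t.2.2

def tri : Fin 15 → Fin 15 × Fin 15 × Fin 15
  | 0 => (0,3,6) | 1 => (1,4,7) | 2 => (2,5,8) | 3 => (0,1,2) | 4 => (3,4,5) | 5 => (6,7,8)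
  | 6 => (0,9,12) | 7 => (1,11,13) | 8 => (2,10,14) | 9 => (3,11,14) | 10 => (4,10,12)
  | 11 => (5,9,13) | 12 => (6,10,13) | 13 => (7,9,14) | 14 => (8,11,12)

instance (m : Fin 15) (t : Fin 15 × Fin 15 × Fin 15) : Decidable (triProp m t) := by
  unfold triProp; infer_instance

lemma tri_prop : ∀ m, triProp m (tri m) := by decide

lemma cfl_notall (L : Fin 15 → Fin 15 → ZMod 2) (m a b c : Fin 15)
    (htr : ∀ j, m ∈ vars j → j = a ∨ j = b ∨ j = c) (h : cfl L m) :
    ¬(L a m = L b m ∧ L b m = L c m ∧ L a m = L c m) := by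
  rintro ⟨e1, e2, e3⟩
  obtain ⟨⟨u, v⟩, hp, hm', hd⟩ := h
  have hne : u ≠ v := (Finset.mem_filter.mp hp).2.1
  have hmu : m ∈ vars u := (Finset.mem_inter.mp hm').1
  have hmv : m ∈ vars v := (Finset.mem_inter.mp hm').2
  rcases htr u hmu with rfl | rfl | rfl <;> rcases htr v hmv with rfl | rfl | rfl <;>
    first
    | exact hne rfl
    | exact hd e1
    | exact hd e1.symm
    | exact hd e2
    | exact hd e2.symm
    | exact hd e3
    | exact hd e3.symm

set_option maxHeartbeats 1600000 in
lemma bridge (A B : Fin 15 → Fin 15 → ZMod 2) (j₀ : Fin 15)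
    (hsync : ∀ j, j ≠ j₀ → ((∑ x ∈ vars j, A j x) = par j ∧ ∀ x ∈ vars j, A j x = B j x))
    (m : Fin 15) :
    ((Pairs.filter (winP A B)).filter (fun p => m ∈ vars p.1 ∩ vars p.2)).card
      + (if (∑ x ∈ vars j₀, A j₀ x) = par j₀ then (if cfl A m then 2 else 0)
         else (if m ∈ vars j₀ then 2 else 0))
      + (if (∑ x ∈ vars j₀, B j₀ x) = par j₀ then (if cfl (LB A B j₀) m then 2 else 0)
         else (if m ∈ vars j₀ then 2 else 0)) ≤ 6 := by
  rcases hE : tri m with ⟨a, b, c⟩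
  have hT := tri_prop m
  rw [hE] at hT
  obtain ⟨hab, hac, hbc, hma, hmb, hmc, v1, v2, v3, v4, v5, v6, htr⟩ := hT
  by_cases h0a : j₀ = a
  · refine core A B j₀ a b c m _ _ hab hac hbc v1 v2 v3 v4 v5 v6 hma hmb hmc htr
      (Or.inl h0a) hsync ?_ ?_
    · by_cases hpa : (∑ x ∈ vars j₀, A j₀ x) = par j₀
      · simp only [if_pos hpa]
        by_cases hca : cfl A m
        · exact Or.inr ⟨if_pos hca, Or.inl (cfl_notall A m a b c htr hca)⟩
        · exact Or.inl (if_neg hca)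
      · simp only [if_neg hpa]
        by_cases hm0 : m ∈ vars j₀
        · exact Or.inr ⟨if_pos hm0, Or.inr ⟨hpa, h0a⟩⟩
        · exact Or.inl (if_neg hm0)
    · by_cases hpb : (∑ x ∈ vars j₀, B j₀ x) = par j₀
      · simp only [if_pos hpb]
        by_cases hcb : cfl (LB A B j₀) m
        · exact Or.inr ⟨if_pos hcb, Or.inl (cfl_notall (LB A B j₀) m a b c htr hcb)⟩
        · exact Or.inl (if_neg hcb)
      · simp only [if_neg hpb]
        by_cases hm0 : m ∈ vars j₀
        · exact Or.inr ⟨if_pos hm0, Or.inr ⟨hpb, h0a⟩⟩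
        · exact Or.inl (if_neg hm0)
  · by_cases h0b : j₀ = b
    · have htr' : ∀ j, m ∈ vars j → j = b ∨ j = a ∨ j = c := by
        intro j hmj; rcases htr j hmj with hh | hh | hh <;> tauto
      refine core A B j₀ b a c m _ _ hab.symm hbc hac v2 v1 v5 v6 v3 v4 hmb hma hmc htr'
        (Or.inl h0b) hsync ?_ ?_
      · by_cases hpa : (∑ x ∈ vars j₀, A j₀ x) = par j₀
        · simp only [if_pos hpa]
          by_cases hca : cfl A m
          · exact Or.inr ⟨if_pos hca, Or.inl (cfl_notall A m b a c htr' hca)⟩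
          · exact Or.inl (if_neg hca)
        · simp only [if_neg hpa]
          by_cases hm0 : m ∈ vars j₀
          · exact Or.inr ⟨if_pos hm0, Or.inr ⟨hpa, h0b⟩⟩
          · exact Or.inl (if_neg hm0)
      · by_cases hpb : (∑ x ∈ vars j₀, B j₀ x) = par j₀
        · simp only [if_pos hpb]
          by_cases hcb : cfl (LB A B j₀) m
          · exact Or.inr ⟨if_pos hcb, Or.inl (cfl_notall (LB A B j₀) m b a c htr' hcb)⟩
          · exact Or.inl (if_neg hcb)
        · simp only [if_neg hpb]
          by_cases hm0 : m ∈ vars j₀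
          · exact Or.inr ⟨if_pos hm0, Or.inr ⟨hpb, h0b⟩⟩
          · exact Or.inl (if_neg hm0)
    · by_cases h0c : j₀ = c
      · have htr' : ∀ j, m ∈ vars j → j = c ∨ j = a ∨ j = b := by
          intro j hmj; rcases htr j hmj with hh | hh | hh <;> tauto
        refine core A B j₀ c a b m _ _ hac.symm hbc.symm hab v4 v3 v6 v5 v1 v2 hmc hma hmb htr'
          (Or.inl h0c) hsync ?_ ?_
        · by_cases hpa : (∑ x ∈ vars j₀, A j₀ x) = par j₀
          · simp only [if_pos hpa]
            by_cases hca : cfl A m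
            · exact Or.inr ⟨if_pos hca, Or.inl (cfl_notall A m c a b htr' hca)⟩
            · exact Or.inl (if_neg hca)
          · simp only [if_neg hpa]
            by_cases hm0 : m ∈ vars j₀
            · exact Or.inr ⟨if_pos hm0, Or.inr ⟨hpa, h0c⟩⟩
            · exact Or.inl (if_neg hm0)
        · by_cases hpb : (∑ x ∈ vars j₀, B j₀ x) = par j₀
          · simp only [if_pos hpb]
            by_cases hcb : cfl (LB A B j₀) m
            · exact Or.inr ⟨if_pos hcb, Or.inl (cfl_notall (LB A B j₀) m c a b htr' hcb)⟩
            · exact Or.inl (if_neg hcb)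
          · simp only [if_neg hpb]
            by_cases hm0 : m ∈ vars j₀
            · exact Or.inr ⟨if_pos hm0, Or.inr ⟨hpb, h0c⟩⟩
            · exact Or.inl (if_neg hm0)
      · have hnm : m ∉ vars j₀ := by
          intro hm0
          rcases htr j₀ hm0 with hh | hh | hh
          · exact h0a hh
          · exact h0b hh
          · exact h0c hh
        refine core A B j₀ a b c m _ _ hab hac hbc v1 v2 v3 v4 v5 v6 hma hmb hmc htr
          (Or.inr hnm) hsync ?_ ?_
        · by_cases hpa : (∑ x ∈ vars j₀, A j₀ x) = par j₀
          · simp only [if_pos hpa]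
            by_cases hca : cfl A m
            · exact Or.inr ⟨if_pos hca, Or.inl (cfl_notall A m a b c htr hca)⟩
            · exact Or.inl (if_neg hca)
          · simp only [if_neg hpa]
            exact Or.inl (if_neg hnm)
        · by_cases hpb : (∑ x ∈ vars j₀, B j₀ x) = par j₀
          · simp only [if_pos hpb]
            by_cases hcb : cfl (LB A B j₀) m
            · exact Or.inr ⟨if_pos hcb, Or.inl (cfl_notall (LB A B j₀) m a b c htr hcb)⟩
            · exact Or.inl (if_neg hcb)
          · simp only [if_neg hpb]
            exact Or.inl (if_neg hnm)


def syncP (A B : Fin 15 → Fin 15 → ZMod 2) (j : Fin 15) : Prop :=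
  (∑ m ∈ vars j, A j m) = par j ∧ ∀ m ∈ vars j, A j m = B j m

instance (A B : Fin 15 → Fin 15 → ZMod 2) : DecidablePred (syncP A B) := fun j => by
  unfold syncP; infer_instance

lemma AMSwins_eq (A B : Fin 15 → Fin 15 → ZMod 2) :
    AMSwins A B = (Pairs.filter (winP A B)).card := by
  unfold AMSwins
  congr 1

lemma Syncwins_eq (A B : Fin 15 → Fin 15 → ZMod 2) :
    Syncwins A B = (Finset.univ.filter (syncP A B)).card := by
  unfold Syncwins
  congr 1

set_option maxHeartbeats 1600000

theorem ams_optimal_syncwins_le_13 (A B : Fin 15 → Fin 15 → ZMod 2)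
    (h : AMSwins A B = 80) : Syncwins A B ≤ 13 := by
  by_contra hlt
  push_neg at hlt
  have hsw : 14 ≤ (Finset.univ.filter (syncP A B)).card := by
    rw [← Syncwins_eq]; omega
  have hcompl : (Finset.univ \ Finset.univ.filter (syncP A B)).card ≤ 1 := by
    rw [Finset.card_sdiff_of_subset (Finset.filter_subset _ _)]
    have h15 : (Finset.univ : Finset (Fin 15)).card = 15 := by simp
    omega
  obtain ⟨j₀, hj₀⟩ : ∃ j₀ : Fin 15, ∀ j, j ≠ j₀ → syncP A B j := by
    by_cases hne : (Finset.univ \ Finset.univ.filter (syncP A B)).Nonempty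
    · obtain ⟨a, ha⟩ := hne
      refine ⟨a, fun j hj => ?_⟩
      by_contra hs
      have hjmem : j ∈ Finset.univ \ Finset.univ.filter (syncP A B) :=
        Finset.mem_sdiff.mpr ⟨Finset.mem_univ j, fun hmem => hs (Finset.mem_filter.mp hmem).2⟩
      exact hj (Finset.card_le_one.mp hcompl j hjmem a ha)
    · refine ⟨0, fun j _ => ?_⟩
      rw [Finset.not_nonempty_iff_eq_empty] at hne
      by_contra hs
      have hjmem : j ∈ Finset.univ \ Finset.univ.filter (syncP A B) :=
        Finset.mem_sdiff.mpr ⟨Finset.mem_univ j, fun hmem => hs (Finset.mem_filter.mp hmem).2⟩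
      rw [hne] at hjmem
      exact absurd hjmem (Finset.notMem_empty j)
  have hsync : ∀ j, j ≠ j₀ → ((∑ x ∈ vars j, A j x) = par j ∧ ∀ x ∈ vars j, A j x = B j x) :=
    fun j hj => hj₀ j hj
  -- notation
  set W : Finset (Fin 15 × Fin 15) := Pairs.filter (winP A B) with hW
  set X : Fin 15 → ℕ := fun m =>
    if (∑ x ∈ vars j₀, A j₀ x) = par j₀ then (if cfl A m then 2 else 0)
    else (if m ∈ vars j₀ then 2 else 0) with hX
  set Y : Fin 15 → ℕ := fun m =>
    if (∑ x ∈ vars j₀, B j₀ x) = par j₀ then (if cfl (LB A B j₀) m then 2 else 0)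
    else (if m ∈ vars j₀ then 2 else 0) with hY
  have hpt : ∀ m : Fin 15,
      (W.filter (fun p => m ∈ vars p.1 ∩ vars p.2)).card + X m + Y m ≤ 6 :=
    fun m => bridge A B j₀ hsync m
  -- covering
  have hcov : W ⊆ Finset.univ.biUnion (fun m => W.filter (fun p => m ∈ vars p.1 ∩ vars p.2)) := by
    intro p hp
    have hpP : p ∈ Pairs := (Finset.mem_filter.mp hp).1
    have hcard1 : (vars p.1 ∩ vars p.2).card = 1 := (Finset.mem_filter.mp hpP).2.2
    obtain ⟨x, hx⟩ := Finset.card_eq_one.mp hcard1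
    refine Finset.mem_biUnion.mpr ⟨x, Finset.mem_univ x, Finset.mem_filter.mpr ⟨hp, ?_⟩⟩
    rw [hx]
    exact Finset.mem_singleton_self x
  have hWle : W.card ≤ ∑ m : Fin 15, (W.filter (fun p => m ∈ vars p.1 ∩ vars p.2)).card :=
    le_trans (Finset.card_le_card hcov) (Finset.card_biUnion_le)
  -- sum bound
  have h90 : ∑ m : Fin 15, ((W.filter (fun p => m ∈ vars p.1 ∩ vars p.2)).card + X m + Y m) ≤ 90 := by
    calc ∑ m : Fin 15, ((W.filter (fun p => m ∈ vars p.1 ∩ vars p.2)).card + X m + Y m)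
        ≤ ∑ _m : Fin 15, 6 := Finset.sum_le_sum (fun m _ => hpt m)
      _ = 90 := by simp
  rw [Finset.sum_add_distrib, Finset.sum_add_distrib] at h90
  -- X sum ≥ 6
  have hvarscard : ∀ j : Fin 15, (vars j).card = 3 := by decide
  have hXsum : 6 ≤ ∑ m : Fin 15, X m := by
    rw [hX]
    by_cases hpa : (∑ x ∈ vars j₀, A j₀ x) = par j₀
    · simp only [if_pos hpa]
      have hparA : ∀ j, (∑ x ∈ vars j, A j x) = par j := by
        intro j
        by_cases hj : j = j₀
        · rw [hj]; exact hpa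
        · exact (hsync j hj).1
      obtain ⟨m1, m2, m3, h12, h13, h23, hc1, hc2, hc3⟩ := three_confl A hparA
      have hle : ∑ m ∈ ({m1, m2, m3} : Finset (Fin 15)), (if cfl A m then 2 else 0)
          ≤ ∑ m : Fin 15, (if cfl A m then 2 else 0) :=
        Finset.sum_le_sum_of_subset (Finset.subset_univ _)
      have heq : ∑ m ∈ ({m1, m2, m3} : Finset (Fin 15)), (if cfl A m then 2 else 0) = 6 := by
        rw [Finset.sum_insert (by simp [h12, h13]), Finset.sum_insert (by simp [h23]),
          Finset.sum_singleton, if_pos hc1, if_pos hc2, if_pos hc3]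
        rfl
      omega
    · simp only [if_neg hpa]
      have : ∑ m : Fin 15, (if m ∈ vars j₀ then 2 else 0) = 6 := by
        rw [Finset.sum_ite_mem, Finset.univ_inter, Finset.sum_const, hvarscard j₀]
        rfl
      omega
  have hYsum : 6 ≤ ∑ m : Fin 15, Y m := by
    rw [hY]
    by_cases hpb : (∑ x ∈ vars j₀, B j₀ x) = par j₀
    · simp only [if_pos hpb]
      have hparB : ∀ j, (∑ x ∈ vars j, LB A B j₀ j x) = par j := by
        intro j
        by_cases hj : j = j₀
        · subst hj
          have : ∀ x ∈ vars j, LB A B j j x = B j x := fun x _ => if_pos rfl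
          rw [Finset.sum_congr rfl this]
          exact hpb
        · have : ∀ x ∈ vars j, LB A B j₀ j x = A j x := fun x _ => if_neg hj
          rw [Finset.sum_congr rfl this]
          exact (hsync j hj).1
      obtain ⟨m1, m2, m3, h12, h13, h23, hc1, hc2, hc3⟩ := three_confl (LB A B j₀) hparB
      have hle : ∑ m ∈ ({m1, m2, m3} : Finset (Fin 15)), (if cfl (LB A B j₀) m then 2 else 0)
          ≤ ∑ m : Fin 15, (if cfl (LB A B j₀) m then 2 else 0) :=
        Finset.sum_le_sum_of_subset (Finset.subset_univ _)
      have heq : ∑ m ∈ ({m1, m2, m3} : Finset (Fin 15)), (if cfl (LB A B j₀) m then 2 else 0) = 6 := by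
        rw [Finset.sum_insert (by simp [h12, h13]), Finset.sum_insert (by simp [h23]),
          Finset.sum_singleton, if_pos hc1, if_pos hc2, if_pos hc3]
        rfl
      omega
    · simp only [if_neg hpb]
      have : ∑ m : Fin 15, (if m ∈ vars j₀ then 2 else 0) = 6 := by
        rw [Finset.sum_ite_mem, Finset.univ_inter, Finset.sum_const, hvarscard j₀]
        rfl
      omega
  have hW80 : W.card = 80 := by rw [hW, ← AMSwins_eq]; exact h
  omega
end

section
/- The AMS boolean linear system admits an operator solution by 4×4 complex matrices: there exists an injective map O : Fin 15 → Matrix (Fin 4) (Fin 4) ℂ such that for every m ∈ Fin 15, O m is Hermitian, (O m) * (O m) = 1, O m ≠ 1 and O m ≠ -1, and for every equation index j ∈ Fin 15, writing vars(j) = {m₁, m₂, m₃} (listed in increasing order), the three matrices O m₁, O m₂, O m₃ pairwise commute and O m₁ * O m₂ * O m₃ = (-1)^{par(j)} • 1 (so the product is the identity when par(j) = 0 and minus the identity when par(j) = 1). -/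
/-!
The fifteen non-identity two-qubit Pauli operators `σ_a ⊗ σ_b` solve the system. Each is a
Hermitian involution because the single-qubit Pauli matrices are; commutation and the products
along each equation are finite identities between matrices with entries in `ℤ[i]`, checked by
computation there and transported to `ℂ` along the injective `*`-ring map `ℤ[i] → ℂ`.
-/

open Matrix Kronecker

theorem Finset.sort_insert_insert_singleton {α : Type*} [LinearOrder α] {a b c : α}
    (hab : a < b) (hbc : b < c) : ({a, b, c} : Finset α).sort (· ≤ ·) = [a, b, c] := by
  have hac := hab.trans hbc
  simpa using (List.toFinset_sort (r := (· ≤ ·)) (l := [a, b, c])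
    (by simp [hab.ne, hbc.ne, hac.ne])).mpr (by simp [hab.le, hbc.le, hac.le])

theorem GaussianInt.semiconj_toComplex_star : Function.Semiconj toComplex star star :=
  fun x => by simp [toComplex_star]

def pauli : Fin 4 → Matrix (Fin 2) (Fin 2) GaussianInt
  | 0 => 1
  | 1 => !![0, 1; 1, 0]
  | 2 => !![0, -⟨0, 1⟩; ⟨0, 1⟩, 0]
  | 3 => !![1, 0; 0, -1]

theorem pauli_isHermitian : ∀ a, (pauli a).IsHermitian := by decide

theorem pauli_mul_self : ∀ a, pauli a * pauli a = 1 := by decide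

def twoQubitPauli (ab : Fin 4 × Fin 4) : Matrix (Fin 4) (Fin 4) GaussianInt :=
  reindex finProdFinEquiv finProdFinEquiv (pauli ab.1 ⊗ₖ pauli ab.2)

theorem twoQubitPauli_isHermitian (ab : Fin 4 × Fin 4) : (twoQubitPauli ab).IsHermitian := by
  rw [IsHermitian, twoQubitPauli, conjTranspose_reindex, conjTranspose_kronecker,
    (pauli_isHermitian _).eq, (pauli_isHermitian _).eq]

theorem twoQubitPauli_mul_self (ab : Fin 4 × Fin 4) :
    twoQubitPauli ab * twoQubitPauli ab = 1 := by
  rw [twoQubitPauli, reindex_apply, submatrix_mul_equiv, ← mul_kronecker_mul, pauli_mul_self,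
    pauli_mul_self, one_kronecker_one, submatrix_one_equiv]

theorem twoQubitPauli_injective : Function.Injective twoQubitPauli := by decide

theorem twoQubitPauli_zero : twoQubitPauli 0 = 1 := by decide

theorem twoQubitPauli_ne_neg_one : ∀ ab, twoQubitPauli ab ≠ -1 := by decide

/-- The labels of the AMS variables in the order
`IX, IY, IZ, XI, YI, ZI, XX, XY, XZ, YX, YY, YZ, ZX, ZY, ZZ`. -/
def amsLabel : Fin 15 → Fin 4 × Fin 4
  | 0 => (0, 1) | 1 => (0, 2) | 2 => (0, 3)
  | 3 => (1, 0) | 4 => (2, 0) | 5 => (3, 0)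
  | 6 => (1, 1) | 7 => (1, 2) | 8 => (1, 3)
  | 9 => (2, 1) | 10 => (2, 2) | 11 => (2, 3)
  | 12 => (3, 1) | 13 => (3, 2) | 14 => (3, 3)

theorem amsLabel_injective : Function.Injective amsLabel := by decide

theorem amsLabel_ne_zero : ∀ m, amsLabel m ≠ 0 := by decide

def amsPauli (m : Fin 15) : Matrix (Fin 4) (Fin 4) GaussianInt := twoQubitPauli (amsLabel m)

theorem amsPauli_commute : ∀ j, ∀ m₁ ∈ vars j, ∀ m₂ ∈ vars j,
    Commute (amsPauli m₁) (amsPauli m₂) := by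
  unfold Commute SemiconjBy
  decide

theorem amsPauli_prod (j : Fin 15) :
    (((vars j).sort (· ≤ ·)).map amsPauli).prod = (-1) ^ (par j).val := by
  fin_cases j <;>
    simp only [vars] <;>
    rw [Finset.sort_insert_insert_singleton (by decide) (by decide)] <;>
    decide

/-- The AMS boolean linear system admits an operator solution by two-qubit
observables: an injective assignment of Hermitian involutive 4×4 complex
matrices (other than `±1`) to the 15 variables such that, for each equation
`j`, the matrices assigned to `vars j` (taken in increasing order of index)
pairwise commute and multiply to `(-1) ^ par j` times the identity. -/
theorem ams_operator_solution :
    ∃ O : Fin 15 → Matrix (Fin 4) (Fin 4) ℂ,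
      Function.Injective O ∧
      (∀ m, (O m).IsHermitian) ∧
      (∀ m, O m * O m = 1) ∧
      (∀ m, O m ≠ 1) ∧
      (∀ m, O m ≠ -1) ∧
      (∀ j : Fin 15, ∀ m₁ ∈ vars j, ∀ m₂ ∈ vars j, Commute (O m₁) (O m₂)) ∧
      (∀ j : Fin 15,
        (((vars j).sort (· ≤ ·)).map O).prod =
          ((-1 : ℂ) ^ (par j).val) • (1 : Matrix (Fin 4) (Fin 4) ℂ)) := by
  let f : Matrix (Fin 4) (Fin 4) GaussianInt →+* Matrix (Fin 4) (Fin 4) ℂ :=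
    GaussianInt.toComplex.mapMatrix
  have hf : Function.Injective f := map_injective GaussianInt.toComplex_injective
  refine ⟨fun m => f (amsPauli m), hf.comp (twoQubitPauli_injective.comp amsLabel_injective),
    fun m => (twoQubitPauli_isHermitian _).map _ GaussianInt.semiconj_toComplex_star,
    fun m => by rw [← map_mul, amsPauli, twoQubitPauli_mul_self, map_one],
    fun m => ?_, fun m => ?_, fun j m₁ h₁ m₂ h₂ => (amsPauli_commute j m₁ h₁ m₂ h₂).map f,
    fun j => ?_⟩
  · rw [Ne, map_eq_one_iff f hf, amsPauli, ← twoQubitPauli_zero, twoQubitPauli_injective.eq_iff]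
    exact amsLabel_ne_zero m
  · rw [Ne, ← map_one f, ← map_neg, hf.eq_iff]
    exact twoQubitPauli_ne_neg_one _
  · rw [← Algebra.algebraMap_eq_smul_one, map_pow, map_neg, map_one]
    refine (List.prod_map_hom _ amsPauli f).trans ?_
    rw [amsPauli_prod, map_pow, map_neg, map_one]
end
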